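/- arXiv:2505.03157 — 4 statements merged into one kernel-verified Lean document; each statement's English description precedes it below -/
import Mathlib

section
/- Let P be the one-step transition matrix of an irreducible Markov chain on a countable state space S, let z ∈ S, let A ⊆ S be a finite set with z ∈ A and such that the complement A^c is nonempty (or, more generally, such that from every state of A' = A∖{z} there is a finite-length positive-probability path reaching a state of {z} ∪ A^c), and let B̃ = (P(x,y) : x,y ∈ A'). Then B̃^n(x,y) → 0 as n → ∞ for every x,y ∈ A', the matrix I − B̃ is nonsingular, and (I − B̃)^{-1} = ∑_{j=0}^∞ B̃^j. -/
open MeasureTheory ENNReal Filter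

noncomputable section

namespace MCTrunc

variable {S : Type*}

/-- `P` is a (row-)stochastic matrix on the state space `S`:
nonnegative entries and rows summing to one. -/
def IsStochasticMatrix (P : S → S → ℝ) : Prop :=
  (∀ x y, 0 ≤ P x y) ∧ ∀ x, HasSum (fun y => P x y) 1

open scoped Classical in
/-- `n`-step transition probabilities associated with `P`. -/
def stepIter (P : S → S → ℝ) : ℕ → S → S → ℝ
  | 0 => fun x y => if x = y then 1 else 0
  | n + 1 => fun x y => ∑' w, stepIter P n x w * P w y

/-- Irreducibility of the transition matrix `P`. -/
def IsIrreducibleMatrix (P : S → S → ℝ) : Prop :=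
  ∀ x y, ∃ n : ℕ, 0 < stepIter P n x y

/-- `μ x` is the law of the Markov chain with one-step transition matrix `P`
started at `x`, specified through its finite-dimensional distributions. -/
def IsMarkovChain [MeasurableSpace S] (P : S → S → ℝ) (μ : S → Measure (ℕ → S)) : Prop :=
  (∀ x, IsProbabilityMeasure (μ x)) ∧
  ∀ (n : ℕ) (path : ℕ → S),
    μ (path 0) {ω | ∀ i ≤ n, ω i = path i} =
      ENNReal.ofReal (∏ i ∈ Finset.range n, P (path i) (path (i + 1)))

/-- First hitting time `inf {n ≥ 0 : X_n ∈ C}`, valued in `ℕ∞`. -/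
def hitTime (C : Set S) (ω : ℕ → S) : ℕ∞ :=
  sInf {m : ℕ∞ | ∃ n : ℕ, m = n ∧ ω n ∈ C}

/-- First hitting time of `C` strictly after time `θ`:
`inf {n : θ < n, X_n ∈ C}`. -/
def hitTimeAfter (C : Set S) (θ : ℕ∞) (ω : ℕ → S) : ℕ∞ :=
  sInf {m : ℕ∞ | ∃ n : ℕ, m = n ∧ θ < (n : ℕ∞) ∧ ω n ∈ C}

/-- First return time `τ(z) = inf {n ≥ 1 : X_n = z}`. -/
def retTime (z : S) (ω : ℕ → S) : ℕ∞ :=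
  sInf {m : ℕ∞ | ∃ n : ℕ, m = n ∧ 1 ≤ n ∧ ω n = z}

open scoped Classical in
/-- `∑_{a ≤ j < b} r(X_j)` along the path `ω`, valued in `ℝ≥0∞`. -/
def sumOver (r : S → ℝ) (a b : ℕ∞) (ω : ℕ → S) : ℝ≥0∞ :=
  ∑' j : ℕ, if a ≤ (j : ℕ∞) ∧ (j : ℕ∞) < b then ENNReal.ofReal (r (ω j)) else 0

/-- `∑_{0 ≤ j < b} r(X_j)` along the path `ω`. -/
def sumBefore (r : S → ℝ) (b : ℕ∞) (ω : ℕ → S) : ℝ≥0∞ := sumOver r 0 b ω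

/-- The chain is positive recurrent: from every state, the expected return time
to that state is finite. -/
def IsPositiveRecurrent [MeasurableSpace S] (μ : S → Measure (ℕ → S)) : Prop :=
  ∀ x : S, ∫⁻ ω, sumBefore (fun _ => 1) (retTime x ω) ω ∂ μ x < ⊤

/-- The chain is recurrent: every state is revisited almost surely. -/
def IsRecurrent [MeasurableSpace S] (μ : S → Measure (ℕ → S)) : Prop :=
  ∀ x : S, μ x {ω | retTime x ω < ⊤} = 1

variable [DecidableEq S]

/-- The substochastic matrix `B̃ = (P(x,y) : x, y ∈ A' = A \ {z})`. -/
def trB (P : S → S → ℝ) (z : S) (A : Finset S) :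
    Matrix ↥(A.erase z) ↥(A.erase z) ℝ :=
  Matrix.of fun x y => P x y

/-- The row vector `ν̃ = (P(z,x) : x ∈ A')`. -/
def trNu (P : S → S → ℝ) (z : S) (A : Finset S) : ↥(A.erase z) → ℝ := fun x => P z x

/-- The column vector `p̃ = (P(x,z) : x ∈ A')`. -/
def trCol (P : S → S → ℝ) (z : S) (A : Finset S) : ↥(A.erase z) → ℝ := fun x => P x z

/-- The all-ones column vector `ẽ` on `A'`. -/
def trE (z : S) (A : Finset S) : ↥(A.erase z) → ℝ := fun _ => 1

/-- Restriction of `f : S → ℝ` to `A' = A \ {z}`. -/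
def trRes (f : S → ℝ) (z : S) (A : Finset S) : ↥(A.erase z) → ℝ := fun x => f x

/-- The truncation approximation `π̃` to the stationary distribution:
`π̃(x) = (ν̃ (I - B̃)⁻¹)(x) / (1 + ν̃ (I - B̃)⁻¹ ẽ)` for `x ∈ A'`,
`π̃(z) = (1 + ν̃ (I - B̃)⁻¹ ẽ)⁻¹`, and `π̃ = 0` off `A`. -/
def trPi (P : S → S → ℝ) (z : S) (A : Finset S) (x : S) : ℝ :=
  let row := Matrix.vecMul (trNu P z A) (1 - trB P z A)⁻¹
  let D : ℝ := 1 + dotProduct row (trE z A)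
  if x = z then 1 / D
  else if hx : x ∈ A.erase z then row ⟨x, hx⟩ / D
  else 0

/-- `max {|v x| : x ∈ T}` (as a supremum). -/
def supOn {ι : Type*} (T : Set ι) (v : ι → ℝ) : ℝ := sSup ((fun x => |v x|) '' T)

/-- `min {v x : x ∈ T}` (as an infimum). -/
def infOn {ι : Type*} (T : Set ι) (v : ι → ℝ) : ℝ := sInf (v '' T)

/-- The excursion times `Γ_i`: `Γ_0 = 0`, `Γ_i = inf {n > T_i : X_n ∈ K}` where
`T_1 = inf {n ≥ 0 : X_n ∈ A^c}` and `T_{i+1} = inf {n > Γ_i : X_n ∈ A^c}`. -/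
def excGamma (Acomp K : Set S) (ω : ℕ → S) : ℕ → ℕ∞
  | 0 => 0
  | 1 => hitTimeAfter K (hitTime Acomp ω) ω
  | i + 2 => hitTimeAfter K (hitTimeAfter Acomp (excGamma Acomp K ω (i + 1)) ω) ω

/-- `N = inf {n ≥ 1 : τ(z) < Γ_n}`. -/
def excN (z : S) (Acomp K : Set S) (ω : ℕ → S) : ℕ∞ :=
  sInf {m : ℕ∞ | ∃ n : ℕ, m = n ∧ 1 ≤ n ∧ retTime z ω < excGamma Acomp K ω n}

/-- Entries of the powers `B^n` of the taboo matrix `B = (P(x,y) : x,y ∈ S \ {z})`,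
valued in `ℝ≥0∞`. -/
def tabooPow (P : S → S → ℝ) (z : S) : ℕ → S → S → ℝ≥0∞
  | 0 => fun x y => if x = y then 1 else 0
  | n + 1 => fun x y =>
      ∑' w : S, if w = z then 0 else tabooPow P z n x w * ENNReal.ofReal (P w y)

end MCTrunc

/-!
Restricted to `A' = A \ {z}`, the chain loses mass: irreducibility (or the reachability
hypothesis) gives every state of `A'` a positive-probability path leaving `A'`, so some power
of `B̃` has row sum `< 1` at that state. Row sums of `B̃ ^ n` are nonincreasing in `n`, so a
single power `B̃ ^ m` has all row sums `< 1`, i.e. `‖B̃ ^ m‖ < 1` in the `ℓ∞` operator norm,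
whence `B̃ ^ n → 0`. Then `1 - B̃` has trivial kernel, and
`(1 - B̃) ∑_{j<n} B̃ ^ j = 1 - B̃ ^ n` identifies the Neumann series with `(1 - B̃)⁻¹`.
-/

open Matrix Topology

theorem norm_pow_mul_add_le {R : Type*} [SeminormedRing R] (x : R) (m q r : ℕ) :
    ‖x ^ (m * q + r)‖ ≤ ‖x ^ m‖ ^ q * ‖x ^ r‖ := by
  induction q with
  | zero => simp
  | succ q ih =>
    calc ‖x ^ (m * (q + 1) + r)‖ = ‖x ^ m * x ^ (m * q + r)‖ := by
          rw [mul_add_one, add_comm (m * q), add_assoc, pow_add]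
      _ ≤ ‖x ^ m‖ * ‖x ^ (m * q + r)‖ := norm_mul_le _ _
      _ ≤ ‖x ^ m‖ * (‖x ^ m‖ ^ q * ‖x ^ r‖) := by gcongr
      _ = ‖x ^ m‖ ^ (q + 1) * ‖x ^ r‖ := by ring

theorem tendsto_pow_atTop_nhds_zero_of_norm_pow_lt_one {R : Type*} [SeminormedRing R] {x : R}
    {m : ℕ} (hm : m ≠ 0) (hxm : ‖x ^ m‖ < 1) (hx : ∀ n, ‖x ^ n‖ ≤ 1) :
    Tendsto (x ^ ·) atTop (𝓝 0) := by
  refine squeeze_zero_norm (fun n => ?_)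
    ((tendsto_pow_atTop_nhds_zero_of_lt_one (norm_nonneg _) hxm).comp
      (Nat.tendsto_div_const_atTop hm))
  calc ‖x ^ n‖ = ‖x ^ (m * (n / m) + n % m)‖ := by rw [Nat.div_add_mod]
    _ ≤ ‖x ^ m‖ ^ (n / m) * ‖x ^ (n % m)‖ := norm_pow_mul_add_le x m (n / m) (n % m)
    _ ≤ ‖x ^ m‖ ^ (n / m) := mul_le_of_le_one_right (by positivity) (hx _)

namespace Matrix

theorem coe_sum_nnnorm_apply_of_nonneg {m n : Type*} [Fintype n] {M : Matrix m n ℝ}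
    (hM : ∀ i j, 0 ≤ M i j) (i : m) : ((∑ j, ‖M i j‖₊ : NNReal) : ℝ) = ∑ j, M i j := by
  push_cast
  exact Finset.sum_congr rfl fun j _ => Real.norm_of_nonneg (hM i j)

variable {ι : Type*} [Fintype ι] [DecidableEq ι]

section Field

variable {K : Type*} [Field K] [TopologicalSpace K] [IsTopologicalRing K] [T2Space K]
  {B : Matrix ι ι K}

theorem isUnit_one_sub_of_tendsto_pow (hB : Tendsto (B ^ ·) atTop (𝓝 0)) : IsUnit (1 - B) := by
  refine mulVec_injective_iff_isUnit.1 fun v w hvw => sub_eq_zero.1 ?_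
  have hfix : B *ᵥ (v - w) = v - w := by
    rw [sub_mulVec, sub_mulVec, one_mulVec, one_mulVec, sub_eq_sub_iff_sub_eq_sub] at hvw
    rw [mulVec_sub, hvw]
  have hpow : ∀ n : ℕ, (B ^ n) *ᵥ (v - w) = v - w := fun n => by
    induction n with
    | zero => rw [pow_zero, one_mulVec]
    | succ n ih => rw [pow_succ, ← mulVec_mulVec, hfix, ih]
  have hlim := ((continuous_id.matrix_mulVec (continuous_const (y := v - w))).tendsto 0).comp hB
  simp only [Function.comp_def, id, hpow, zero_mulVec] at hlim
  exact tendsto_nhds_unique tendsto_const_nhds hlim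

theorem tendsto_sum_range_pow_of_tendsto_pow (hB : Tendsto (B ^ ·) atTop (𝓝 0)) :
    Tendsto (fun n => ∑ i ∈ Finset.range n, B ^ i) atTop (𝓝 (1 - B)⁻¹) := by
  have hdet := (isUnit_iff_isUnit_det _).1 (isUnit_one_sub_of_tendsto_pow hB)
  have hsum (n : ℕ) : ∑ i ∈ Finset.range n, B ^ i = (1 - B)⁻¹ * (1 - B ^ n) := by
    rw [← mul_neg_geom_sum, ← mul_assoc, nonsing_inv_mul _ hdet, one_mul]
  simp_rw [hsum]
  simpa using ((tendsto_const_nhds (x := (1 : Matrix ι ι K))).sub hB).const_mul (1 - B)⁻¹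

end Field

variable {B : Matrix ι ι ℝ}

theorem hasSum_pow_apply_of_tendsto_pow (hB0 : ∀ i j, 0 ≤ B i j)
    (hB : Tendsto (B ^ ·) atTop (𝓝 0)) (i j : ι) :
    HasSum (fun n => (B ^ n) i j) ((1 - B)⁻¹ i j) := by
  refine (hasSum_iff_tendsto_nat_of_nonneg (fun n => pow_apply_nonneg hB0 n i j) _).2 ?_
  simpa [Function.comp_def, sum_apply] using
    ((continuous_id.matrix_elem i j).tendsto _).comp (tendsto_sum_range_pow_of_tendsto_pow hB)

theorem sum_pow_succ_apply (n : ℕ) (i : ι) :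
    ∑ j, (B ^ (n + 1)) i j = ∑ k, B i k * ∑ j, (B ^ n) k j := by
  simp only [pow_succ', mul_apply, Finset.mul_sum]
  exact Finset.sum_comm

theorem sum_pow_succ_apply' (n : ℕ) (i : ι) :
    ∑ j, (B ^ (n + 1)) i j = ∑ k, (B ^ n) i k * ∑ j, B k j := by
  simp only [pow_succ, mul_apply, Finset.mul_sum]
  exact Finset.sum_comm

theorem sum_pow_apply_le_one (hB0 : ∀ i j, 0 ≤ B i j) (hrow : ∀ i, ∑ j, B i j ≤ 1)
    (n : ℕ) (i : ι) : ∑ j, (B ^ n) i j ≤ 1 := by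
  induction n generalizing i with
  | zero => simp [one_apply]
  | succ n ih =>
    rw [sum_pow_succ_apply]
    calc ∑ k, B i k * ∑ j, (B ^ n) k j ≤ ∑ k, B i k * 1 := by
          gcongr with k; exacts [hB0 i k, ih k]
      _ ≤ 1 := by simpa using hrow i

theorem antitone_sum_pow_apply (hB0 : ∀ i j, 0 ≤ B i j) (hrow : ∀ i, ∑ j, B i j ≤ 1)
    (i : ι) : Antitone fun n => ∑ j, (B ^ n) i j := by
  refine antitone_nat_of_succ_le fun n => ?_
  rw [sum_pow_succ_apply']
  calc ∑ k, (B ^ n) i k * ∑ j, B k j ≤ ∑ k, (B ^ n) i k * 1 := by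
        gcongr with k; exacts [pow_apply_nonneg hB0 n i k, hrow k]
    _ = ∑ k, (B ^ n) i k := by simp

theorem sum_pow_succ_apply_lt_one (hB0 : ∀ i j, 0 ≤ B i j) (hrow : ∀ i, ∑ j, B i j ≤ 1)
    {n : ℕ} {i k : ι} (hik : 0 < B i k)
    (hk : ∑ j, (B ^ n) k j < 1) : ∑ j, (B ^ (n + 1)) i j < 1 := by
  rw [sum_pow_succ_apply]
  calc ∑ l, B i l * ∑ j, (B ^ n) l j < ∑ l, B i l * 1 := by
        refine Finset.sum_lt_sum (fun l _ => ?_) ⟨k, Finset.mem_univ _, by gcongr⟩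
        exact mul_le_mul_of_nonneg_left (sum_pow_apply_le_one hB0 hrow n l) (hB0 i l)
    _ ≤ 1 := by simpa using hrow i

section LinftyOpNorm

attribute [local instance] Matrix.linftyOpSemiNormedRing

theorem norm_le_one_of_sum_apply_le_one {M : Matrix ι ι ℝ} (hM : ∀ i j, 0 ≤ M i j)
    (hrow : ∀ i, ∑ j, M i j ≤ 1) : ‖M‖ ≤ 1 := by
  rw [← coe_nnnorm, ← NNReal.coe_one, NNReal.coe_le_coe, linfty_opNNNorm_def]
  refine Finset.sup_le fun i _ => ?_
  rw [← NNReal.coe_le_coe, coe_sum_nnnorm_apply_of_nonneg hM]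
  exact hrow i

theorem norm_lt_one_of_sum_apply_lt_one {M : Matrix ι ι ℝ} (hM : ∀ i j, 0 ≤ M i j)
    (hrow : ∀ i, ∑ j, M i j < 1) : ‖M‖ < 1 := by
  rw [← coe_nnnorm, ← NNReal.coe_one, NNReal.coe_lt_coe, linfty_opNNNorm_def]
  refine (Finset.sup_lt_iff zero_lt_one).2 fun i _ => ?_
  rw [← NNReal.coe_lt_coe, coe_sum_nnnorm_apply_of_nonneg hM]
  exact hrow i

theorem tendsto_pow_of_exists_sum_pow_apply_lt_one (hB0 : ∀ i j, 0 ≤ B i j)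
    (hrow : ∀ i, ∑ j, B i j ≤ 1) (hleak : ∀ i, ∃ n, ∑ j, (B ^ n) i j < 1) :
    Tendsto (B ^ ·) atTop (𝓝 0) := by
  choose k hk using hleak
  have hm : ∀ i, ∑ j, (B ^ (Finset.univ.sup k + 1)) i j < 1 := fun i =>
    (antitone_sum_pow_apply hB0 hrow i
      ((Finset.le_sup (Finset.mem_univ i)).trans (Nat.le_succ _))).trans_lt (hk i)
  exact tendsto_pow_atTop_nhds_zero_of_norm_pow_lt_one (Nat.succ_ne_zero _)
    (norm_lt_one_of_sum_apply_lt_one (pow_apply_nonneg hB0 _) hm)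
    fun n => norm_le_one_of_sum_apply_le_one (pow_apply_nonneg hB0 n)
      (sum_pow_apply_le_one hB0 hrow n)

end LinftyOpNorm

end Matrix

namespace MCTrunc

variable {S : Type*} {P : S → S → ℝ}

theorem stepIter_nonneg (hP : ∀ x y, 0 ≤ P x y) (n : ℕ) (x y : S) : 0 ≤ stepIter P n x y := by
  induction n generalizing y with
  | zero => by_cases h : x = y <;> simp [stepIter, h]
  | succ n ih => exact tsum_nonneg fun w => mul_nonneg (ih w) (hP w y)

theorem exists_path_of_stepIter_pos (hP : ∀ x y, 0 ≤ P x y) {n : ℕ} {x y : S}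
    (h : 0 < stepIter P n x y) :
    ∃ w : ℕ → S, w 0 = x ∧ w n = y ∧ ∀ i < n, 0 < P (w i) (w (i + 1)) := by
  induction n generalizing y with
  | zero =>
    have hxy : x = y := by by_contra hxy; simp [stepIter, hxy] at h
    exact ⟨fun _ => x, rfl, hxy, fun i hi => absurd hi i.not_lt_zero⟩
  | succ n ih =>
    obtain ⟨v, hv⟩ : ∃ v, 0 < stepIter P n x v * P v y := by
      by_contra! hle
      exact h.not_ge (tsum_nonpos hle)
    have hxv := pos_of_mul_pos_left hv (hP v y)
    have hvy := pos_of_mul_pos_right hv (stepIter_nonneg hP n x v)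
    obtain ⟨w, hw0, hwn, hstep⟩ := ih hxv
    refine ⟨fun i => if i ≤ n then w i else y, by simp [hw0], by simp, fun i hi => ?_⟩
    rcases Nat.lt_succ_iff_lt_or_eq.1 hi with hi | rfl
    · simpa [hi.le, Nat.succ_le_of_lt hi] using hstep i hi
    · simpa [hwn] using hvy

theorem forall_lt_pos_of_prod_range_pos (hP : ∀ x y, 0 ≤ P x y) {k : ℕ} {w : ℕ → S}
    (h : 0 < ∏ i ∈ Finset.range k, P (w i) (w (i + 1))) : ∀ i < k, 0 < P (w i) (w (i + 1)) :=
  fun i hi => (hP _ _).lt_of_ne' (Finset.prod_ne_zero_iff.1 h.ne' i (Finset.mem_range.2 hi))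

theorem sum_lt_one_of_pos_of_notMem (hP : IsStochasticMatrix P) {T : Finset S} {x y : S}
    (hxy : 0 < P x y) (hy : y ∉ T) : ∑ v ∈ T, P x v < 1 := by
  classical
  have := sum_le_hasSum (insert y T) (fun v _ => hP.1 x v) (hP.2 x)
  rw [Finset.sum_insert hy] at this
  linarith

theorem sum_submatrix_apply_le_one (hP : IsStochasticMatrix P) (T : Finset S) (x : ↥T) :
    ∑ y, (Matrix.of P).submatrix ((↑) : T → S) ((↑) : T → S) x y ≤ 1 :=
  (Finset.sum_coe_sort T (P ↑x)).trans_le (sum_le_hasSum T (fun y _ => hP.1 x y) (hP.2 x))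

theorem exists_sum_pow_apply_lt_one_of_path [DecidableEq S] (hP : IsStochasticMatrix P)
    {T : Finset S} (k : ℕ) :
    ∀ (w : ℕ → S) (hw0 : w 0 ∈ T), w k ∉ T → (∀ i < k, 0 < P (w i) (w (i + 1))) →
      ∃ n, ∑ v, ((Matrix.of P).submatrix ((↑) : T → S) ((↑) : T → S) ^ n) ⟨w 0, hw0⟩ v < 1 := by
  induction k with
  | zero => exact fun w hw0 hwk => absurd hw0 hwk
  | succ k ih =>
    intro w hw0 hwk hstep
    by_cases hw1 : w 1 ∈ T
    · obtain ⟨n, hn⟩ := ih (fun i => w (i + 1)) hw1 hwk fun i hi => hstep (i + 1) (by omega)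
      exact ⟨n + 1, Matrix.sum_pow_succ_apply_lt_one (fun _ _ => hP.1 _ _)
        (sum_submatrix_apply_le_one hP T) (k := ⟨w 1, hw1⟩) (hstep 0 k.succ_pos) hn⟩
    · refine ⟨1, ?_⟩
      rw [pow_one]
      exact (Finset.sum_coe_sort T (P (w 0))).trans_lt
        (sum_lt_one_of_pos_of_notMem hP (hstep 0 k.succ_pos) hw1)

end MCTrunc

theorem trB_pow_tendsto_zero_isUnit_hasSum_inv_general
    {S : Type*} [DecidableEq S]
    (P : S → S → ℝ) (z : S) (A : Finset S)
    (hP : MCTrunc.IsStochasticMatrix P) (hirr : MCTrunc.IsIrreducibleMatrix P)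
    (hreach : (∃ y : S, y ∉ A) ∨
      (∀ x ∈ A.erase z, ∃ (k : ℕ) (w : ℕ → S), w 0 = x ∧ (w k = z ∨ w k ∉ A) ∧
        0 < ∏ i ∈ Finset.range k, P (w i) (w (i + 1)))) :
    (∀ x y : ↥(A.erase z),
      Filter.Tendsto (fun n : ℕ => ((MCTrunc.trB P z A) ^ n) x y) Filter.atTop (nhds 0)) ∧
    IsUnit (1 - MCTrunc.trB P z A) ∧
    (∀ x y : ↥(A.erase z),
      HasSum (fun j : ℕ => ((MCTrunc.trB P z A) ^ j) x y)
        ((1 - MCTrunc.trB P z A)⁻¹ x y)) := by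
  have hB0 : ∀ x y, 0 ≤ MCTrunc.trB P z A x y := fun x y => hP.1 x y
  have hleak : ∀ x, ∃ n, ∑ y, (MCTrunc.trB P z A ^ n) x y < 1 := by
    rintro ⟨x, hx⟩
    obtain ⟨k, w, rfl, hwk, hstep⟩ : ∃ (k : ℕ) (w : ℕ → S), w 0 = x ∧ w k ∉ A.erase z ∧
        ∀ i < k, 0 < P (w i) (w (i + 1)) := by
      rcases hreach with ⟨y, hy⟩ | hpath
      · obtain ⟨n, hn⟩ := hirr x y
        obtain ⟨w, hw0, rfl, hstep⟩ := MCTrunc.exists_path_of_stepIter_pos hP.1 hn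
        exact ⟨n, w, hw0, fun h => hy (Finset.mem_of_mem_erase h), hstep⟩
      · obtain ⟨k, w, hw0, hwk, hprod⟩ := hpath x hx
        refine ⟨k, w, hw0, ?_, MCTrunc.forall_lt_pos_of_prod_range_pos hP.1 hprod⟩
        rwa [Finset.mem_erase, not_and_or, not_not]
    exact MCTrunc.exists_sum_pow_apply_lt_one_of_path hP k w hx hwk hstep
  have hlim := Matrix.tendsto_pow_of_exists_sum_pow_apply_lt_one hB0
    (MCTrunc.sum_submatrix_apply_le_one hP _) hleak
  refine ⟨fun x y => ?_, Matrix.isUnit_one_sub_of_tendsto_pow hlim,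
    Matrix.hasSum_pow_apply_of_tendsto_pow hB0 hlim⟩
  simpa [Function.comp_def] using ((continuous_id.matrix_elem x y).tendsto 0).comp hlim

/-- the truncated substochastic matrix has vanishing powers,
`I - B̃` is nonsingular, and `(I - B̃)⁻¹ = ∑_{j=0}^∞ B̃^j`. -/
theorem trB_pow_tendsto_zero_isUnit_hasSum_inv
    {S : Type*} [Countable S] [DecidableEq S]
    (P : S → S → ℝ) (z : S) (A : Finset S)
    (hP : MCTrunc.IsStochasticMatrix P) (hirr : MCTrunc.IsIrreducibleMatrix P)
    (hzA : z ∈ A)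
    (hreach : (∃ y : S, y ∉ A) ∨
      (∀ x ∈ A.erase z, ∃ (k : ℕ) (w : ℕ → S), w 0 = x ∧ (w k = z ∨ w k ∉ A) ∧
        0 < ∏ i ∈ Finset.range k, P (w i) (w (i + 1)))) :
    (∀ x y : ↥(A.erase z),
      Filter.Tendsto (fun n : ℕ => ((MCTrunc.trB P z A) ^ n) x y) Filter.atTop (nhds 0)) ∧
    IsUnit (1 - MCTrunc.trB P z A) ∧
    (∀ x y : ↥(A.erase z),
      HasSum (fun j : ℕ => ((MCTrunc.trB P z A) ^ j) x y)
        ((1 - MCTrunc.trB P z A)⁻¹ x y)) :=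
  trB_pow_tendsto_zero_isUnit_hasSum_inv_general P z A hP hirr hreach
end
end

section
/- (Proposition 1) Suppose X is irreducible and positive recurrent, and let (A_n : n ≥ 1) be a sequence of finite truncation sets with z ∈ A_1 and A_n ↗ S. Then for each x ∈ S, the truncation approximations satisfy π̃_n(x) → π(x) as n → ∞, where π is the unique stationary distribution of X. -/
open MeasureTheory ENNReal Filter

noncomputable section

/-!
Let `w_T` be `δ_z` plus the expected numbers of visits before leaving `T` on an excursion from
`z`, computed in `ℝ≥0∞`. Since `π` is excessive, `π(z) w_T ≤ π` whenever `z ∉ T`; in particular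
`w_T` is finite.

For `T = S ∖ {z}` the measure `π(z) w_T` is moreover invariant off `z` and agrees with `π` at `z`,
so `π - π(z) w_T` is a subinvariant measure of finite mass vanishing at `z`. A subinvariant
measure of finite mass is invariant, and by irreducibility an invariant measure vanishing at one
state vanishes everywhere; hence `π = w_T / ∑ w_T`.

For `T = A ∖ {z}`, the restriction of `w_T` solves `r (I - B̃) = ν̃`, and `I - B̃` is invertible
because the absolute values of a left null vector would again form a subinvariant measure of
finite mass vanishing at `z`. Hence `π̃ = w_T / ∑ w_T` as well, and the theorem follows by monotone
convergence, since `w_{A_n ∖ {z}}` increases to `w_{S ∖ {z}}`.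
-/

namespace ENNReal

theorem tsum_iSup_of_monotone {α : Type*} {f : ℕ → α → ℝ≥0∞} (hf : Monotone f) :
    ∑' x, ⨆ n, f n x = ⨆ n, ∑' x, f n x := by
  refine le_antisymm ?_ (iSup_le fun n => ENNReal.tsum_le_tsum fun x => le_iSup (f · x) n)
  rw [ENNReal.tsum_eq_iSup_sum]
  refine iSup_le fun s => ?_
  rw [ENNReal.finsetSum_iSup_of_monotone fun x _ _ hij => hf hij x]
  exact iSup_mono fun n => ENNReal.sum_le_tsum s

end ENNReal

namespace MCTrunc

open scoped Topology

variable {S : Type*}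

section KilledChain

variable (K : S → S → ℝ≥0∞)

def killedStep (T : Set S) : (S → ℝ≥0∞) →ₗ[ℝ≥0∞] S → ℝ≥0∞ where
  toFun f := T.indicator fun y => ∑' x, f x * K x y
  map_add' f g := by
    ext y
    simp only [Pi.add_apply, add_mul, ENNReal.tsum_add, Set.indicator_add]
  map_smul' c f := by
    ext y
    simp only [Pi.smul_apply, smul_eq_mul, mul_assoc, ENNReal.tsum_mul_left, RingHom.id_apply,
      Set.indicator_const_mul]

/-- Expected visits before leaving `T` on an excursion from `z`; for `T = A ∖ {z}` this is
`ν̃ ∑ₖ B̃ᵏ`. -/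
def killedOccupation (z : S) (T : Set S) : S → ℝ≥0∞ :=
  fun y => ∑' k, (killedStep K T ^ k) (T.indicator (K z)) y

variable {K}

theorem killedStep_apply (T : Set S) (f : S → ℝ≥0∞) (y : S) :
    killedStep K T f y = T.indicator (fun y => ∑' x, f x * K x y) y := rfl

theorem killedStep_mono {T T' : Set S} (hT : T ⊆ T') {f g : S → ℝ≥0∞} (hfg : f ≤ g) :
    killedStep K T f ≤ killedStep K T' g := fun y => by
  rw [killedStep_apply, killedStep_apply]
  exact (Set.indicator_le_indicator_of_subset hT (fun _ => zero_le) y).trans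
    (Set.indicator_le_indicator (ENNReal.tsum_le_tsum fun x => mul_le_mul_left (hfg x) _))

theorem killedStep_pow_mono {T T' : Set S} (hT : T ⊆ T') {f g : S → ℝ≥0∞} (hfg : f ≤ g)
    (k : ℕ) : (killedStep K T ^ k) f ≤ (killedStep K T' ^ k) g := by
  induction k with
  | zero => exact hfg
  | succ k ih =>
    rw [pow_succ', pow_succ', Module.End.mul_apply, Module.End.mul_apply]
    exact killedStep_mono hT ih

theorem killedStep_pow_indicator_mono (z : S) {T T' : Set S} (hT : T ⊆ T') (k : ℕ) :
    (killedStep K T ^ k) (T.indicator (K z)) ≤ (killedStep K T' ^ k) (T'.indicator (K z)) :=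
  killedStep_pow_mono hT (Set.indicator_le_indicator_of_subset hT fun _ => zero_le) k

theorem killedOccupation_mono (z : S) {T T' : Set S} (hT : T ⊆ T') :
    killedOccupation K z T ≤ killedOccupation K z T' := fun y =>
  ENNReal.tsum_le_tsum fun k => killedStep_pow_indicator_mono z hT k y

theorem killedStep_tsum (T : Set S) (f : ℕ → S → ℝ≥0∞) (y : S) :
    killedStep K T (fun x => ∑' k, f k x) y = ∑' k, killedStep K T (f k) y := by
  by_cases hy : y ∈ T
  · simp only [killedStep_apply, Set.indicator_of_mem hy, ← ENNReal.tsum_mul_right]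
    exact ENNReal.tsum_comm
  · simp only [killedStep_apply, Set.indicator_of_notMem hy, tsum_zero]

theorem killedOccupation_eq (z : S) (T : Set S) :
    killedOccupation K z T =
      T.indicator fun y => K z y + ∑' x, killedOccupation K z T x * K x y := by
  ext y
  have hstep : ∀ k, (killedStep K T ^ (k + 1)) (T.indicator (K z)) y =
      killedStep K T ((killedStep K T ^ k) (T.indicator (K z))) y := fun k => by
    rw [pow_succ', Module.End.mul_apply]
  rw [killedOccupation, tsum_eq_zero_add' ENNReal.summable, tsum_congr hstep,
    ← killedStep_tsum, killedStep_apply, pow_zero, Module.End.one_apply, Set.indicator_add]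
  rfl

theorem killedOccupation_of_notMem (z : S) {T : Set S} {y : S} (hy : y ∉ T) :
    killedOccupation K z T y = 0 := by
  rw [killedOccupation_eq, Set.indicator_of_notMem hy]

theorem killedStep_le_of_excessive {T : Set S} {z : S} (hz : z ∉ T) {m : S → ℝ≥0∞}
    (hm : ∀ y, ∑' x, m x * K x y ≤ m y) :
    killedStep K T (T.indicator m) + m z • T.indicator (K z) ≤ T.indicator m := by
  intro y
  by_cases hy : y ∈ T
  · simp only [Pi.add_apply, Pi.smul_apply, smul_eq_mul, killedStep_apply,
      Set.indicator_of_mem hy]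
    refine le_trans ?_ (hm y)
    rw [add_comm]
    conv_rhs => rw [ENNReal.tsum_eq_add_tsum_ite z]
    gcongr with x
    by_cases hx : x = z
    · simp [hx, hz]
    · simp only [if_neg hx]
      exact mul_le_mul_left (Set.indicator_le_self T m x) _
  · simp [killedStep_apply, Set.indicator_of_notMem hy]

theorem mul_killedOccupation_le {T : Set S} {z : S} (hz : z ∉ T) {m : S → ℝ≥0∞}
    (hm : ∀ y, ∑' x, m x * K x y ≤ m y) (y : S) :
    m z * killedOccupation K z T y ≤ m y := by
  set L := killedStep K T
  have hpartial : ∀ n, m z • ∑ k ∈ Finset.range n, (L ^ k) (T.indicator (K z)) ≤ T.indicator m := by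
    intro n
    induction n with
    | zero => simp
    | succ n ih =>
      have hsum : ∑ k ∈ Finset.range n, (L ^ (k + 1)) (T.indicator (K z)) =
          L (∑ k ∈ Finset.range n, (L ^ k) (T.indicator (K z))) := by
        simp only [map_sum, pow_succ', Module.End.mul_apply]
      rw [Finset.sum_range_succ', hsum, pow_zero, Module.End.one_apply, smul_add, ← map_smul]
      exact le_trans (add_le_add_left (killedStep_mono subset_rfl ih) _)
        (killedStep_le_of_excessive hz hm)
  rw [killedOccupation, ENNReal.tsum_eq_iSup_nat, ENNReal.mul_iSup]
  refine iSup_le fun n => ?_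
  have := hpartial n y
  simp only [Pi.smul_apply, Finset.sum_apply, smul_eq_mul] at this
  exact this.trans (Set.indicator_le_self T m y)

theorem iSup_killedStep_pow (z : S) {T : ℕ → Set S} (hT : Monotone T) (k : ℕ) (y : S) :
    ⨆ n, (killedStep K (T n) ^ k) ((T n).indicator (K z)) y =
      (killedStep K (⋃ n, T n) ^ k) ((⋃ n, T n).indicator (K z)) y := by
  induction k generalizing y with
  | zero => simp [Set.indicator_iUnion_apply (M := ℝ≥0∞) rfl]
  | succ k ih =>
    refine le_antisymm
      (iSup_le fun n => killedStep_pow_indicator_mono z (Set.subset_iUnion T n) _ y) ?_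
    rw [pow_succ', Module.End.mul_apply, killedStep_apply]
    by_cases hy : y ∈ ⋃ n, T n
    · obtain ⟨n₀, hn₀⟩ := Set.mem_iUnion.1 hy
      simp only [Set.indicator_of_mem hy, ← ih, ENNReal.iSup_mul]
      rw [ENNReal.tsum_iSup_of_monotone
        (f := fun n x => (killedStep K (T n) ^ k) ((T n).indicator (K z)) x * K x y)
        fun a b hab x =>
        mul_le_mul_left (killedStep_pow_indicator_mono z (hT hab) k x) _]
      refine iSup_le fun n => le_iSup_of_le (max n n₀) ?_
      rw [pow_succ', Module.End.mul_apply, killedStep_apply,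
        Set.indicator_of_mem (hT (le_max_right n n₀) hn₀)]
      exact ENNReal.tsum_le_tsum fun x =>
        mul_le_mul_left (killedStep_pow_indicator_mono z (hT (le_max_left n n₀)) k x) _
    · simp [Set.indicator_of_notMem hy]

theorem iSup_killedOccupation (z : S) {T : ℕ → Set S} (hT : Monotone T) (y : S) :
    ⨆ n, killedOccupation K z (T n) y = killedOccupation K z (⋃ n, T n) y := by
  simp only [killedOccupation]
  rw [← ENNReal.tsum_iSup_of_monotone fun a b hab k => killedStep_pow_indicator_mono z (hT hab) k y]
  exact tsum_congr (iSup_killedStep_pow z hT · y)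

end KilledChain

def kernelOf (P : S → S → ℝ) (x y : S) : ℝ≥0∞ := ENNReal.ofReal (P x y)

variable {P : S → S → ℝ}

theorem IsStochasticMatrix.tsum_kernelOf (hP : IsStochasticMatrix P) (x : S) :
    ∑' y, kernelOf P x y = 1 := by
  simp only [kernelOf]
  rw [← ENNReal.ofReal_tsum_of_nonneg (hP.1 x) (hP.2 x).summable, (hP.2 x).tsum_eq,
    ENNReal.ofReal_one]

theorem eq_zero_of_stepIter_ne_zero (hP : ∀ x y, 0 ≤ P x y) {m : S → ℝ≥0∞}
    (hm : ∀ y, ∑' x, m x * kernelOf P x y ≤ m y) {n : ℕ} {x y : S}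
    (hn : stepIter P n x y ≠ 0) (hy : m y = 0) : m x = 0 := by
  induction n generalizing y with
  | zero =>
    obtain rfl : x = y := by by_contra hxy; exact hn (if_neg hxy)
    exact hy
  | succ n ih =>
    obtain ⟨w, hw⟩ : ∃ w, stepIter P n x w * P w y ≠ 0 := by
      by_contra! h
      exact hn ((tsum_congr h).trans tsum_zero)
    have hPwy : 0 < kernelOf P w y :=
      ENNReal.ofReal_pos.2 ((hP w y).lt_of_ne (right_ne_zero_of_mul hw).symm)
    refine ih (left_ne_zero_of_mul hw) ?_
    have hle : m w * kernelOf P w y ≤ 0 := hy ▸ (ENNReal.le_tsum w).trans (hm y)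
    exact (mul_eq_zero.1 (nonpos_iff_eq_zero.1 hle)).resolve_right hPwy.ne'

theorem tsum_mul_eq_of_le_tsum_mul {K : S → S → ℝ≥0∞} (hK : ∀ x, ∑' y, K x y = 1)
    {m : S → ℝ≥0∞} (hfin : ∑' x, m x ≠ ∞) (hle : ∀ y, m y ≤ ∑' x, m x * K x y) (y : S) :
    ∑' x, m x * K x y = m y := by
  have hmass : ∑' y, ∑' x, m x * K x y = ∑' x, m x := by
    rw [ENNReal.tsum_comm]
    simp only [ENNReal.tsum_mul_left, hK, mul_one]
  by_contra hne
  have := ENNReal.tsum_lt_tsum hfin hle ((hle y).lt_of_ne (Ne.symm hne))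
  exact this.ne hmass.symm

theorem IsIrreducibleMatrix.eq_zero_of_le_tsum_mul (hP : IsStochasticMatrix P)
    (hirr : IsIrreducibleMatrix P) {m : S → ℝ≥0∞} (hfin : ∑' x, m x ≠ ∞)
    (hle : ∀ y, m y ≤ ∑' x, m x * kernelOf P x y) {z : S} (hz : m z = 0) : m = 0 := by
  funext x
  obtain ⟨n, hn⟩ := hirr x z
  exact eq_zero_of_stepIter_ne_zero hP.1
    (fun y => (tsum_mul_eq_of_le_tsum_mul hP.tsum_kernelOf hfin hle y).le) hn.ne' hz

/-- The difference `p - ρ` is subinvariant, of finite mass and vanishes at `z`. -/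
theorem IsIrreducibleMatrix.eq_of_le (hP : IsStochasticMatrix P) (hirr : IsIrreducibleMatrix P)
    {p ρ : S → ℝ≥0∞} (hp : ∀ y, ∑' x, p x * kernelOf P x y = p y) (hpfin : ∑' x, p x ≠ ∞)
    (hle : ρ ≤ p) {z : S} (hz : ρ z = p z) (hρ : ∀ y ≠ z, ∑' x, ρ x * kernelOf P x y = ρ y) :
    ρ = p := by
  have hρfin : ∀ y, ρ y ≠ ∞ := fun y =>
    ne_top_of_le_ne_top hpfin ((hle y).trans (ENNReal.le_tsum y))
  have hdiff : ∀ y ≠ z, p y - ρ y = ∑' x, (p x - ρ x) * kernelOf P x y := by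
    intro y hy
    refine ENNReal.sub_eq_of_eq_add (hρfin y) ?_
    rw [← hp y, ← hρ y hy, ← ENNReal.tsum_add]
    exact tsum_congr fun x => by rw [← add_mul, tsub_add_cancel_of_le (hle x)]
  have hzero := hirr.eq_zero_of_le_tsum_mul hP (m := fun y => p y - ρ y)
    (ne_top_of_le_ne_top hpfin (ENNReal.tsum_le_tsum fun x => tsub_le_self))
    (fun y => by
      by_cases hy : y = z
      · simp only [hy, hz, tsub_self, zero_le]
      · exact (hdiff y hy).le)
    (show p z - ρ z = 0 by rw [hz, tsub_self])
  exact funext fun y => le_antisymm (hle y) (tsub_eq_zero_iff_le.1 (congrFun hzero y))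

section Excursion

variable [DecidableEq S]

def excursionMeasure (K : S → S → ℝ≥0∞) (z : S) (T : Set S) (y : S) : ℝ≥0∞ :=
  if y = z then 1 else killedOccupation K z T y

variable {K : S → S → ℝ≥0∞} {z : S} {T : Set S}

theorem excursionMeasure_eq_add (hz : z ∉ T) (y : S) :
    excursionMeasure K z T y = (if y = z then 1 else 0) + killedOccupation K z T y := by
  unfold excursionMeasure
  split_ifs with hy
  · rw [hy, killedOccupation_of_notMem z hz, add_zero]
  · rw [zero_add]

theorem tsum_excursionMeasure (hz : z ∉ T) :
    ∑' y, excursionMeasure K z T y = 1 + ∑' y, killedOccupation K z T y := by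
  simp only [excursionMeasure_eq_add hz, ENNReal.tsum_add, tsum_ite_eq]

theorem tsum_excursionMeasure_mul (hz : z ∉ T) (y : S) :
    ∑' x, excursionMeasure K z T x * K x y = K z y + ∑' x, killedOccupation K z T x * K x y := by
  simp only [excursionMeasure_eq_add hz, add_mul, ite_mul, one_mul, zero_mul, ENNReal.tsum_add,
    tsum_ite_eq]

theorem excursionMeasure_mono {T' : Set S} (hT : T ⊆ T') :
    excursionMeasure K z T ≤ excursionMeasure K z T' := fun y => by
  unfold excursionMeasure
  split_ifs
  exacts [le_rfl, killedOccupation_mono z hT y]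

theorem iSup_excursionMeasure {T : ℕ → Set S} (y : S) (hT : Monotone T) :
    ⨆ n, excursionMeasure K z (T n) y = excursionMeasure K z (⋃ n, T n) y := by
  unfold excursionMeasure
  split_ifs
  exacts [iSup_const, iSup_killedOccupation z hT y]

theorem tendsto_excursionMeasure {T : ℕ → Set S} (hT : Monotone T) (y : S) :
    Tendsto (fun n => excursionMeasure K z (T n) y) atTop
      (𝓝 (excursionMeasure K z (⋃ n, T n) y)) :=
  iSup_excursionMeasure y hT ▸ tendsto_atTop_iSup fun _ _ h => excursionMeasure_mono (hT h) y

theorem tendsto_tsum_excursionMeasure {T : ℕ → Set S} (hT : Monotone T) :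
    Tendsto (fun n => ∑' y, excursionMeasure K z (T n) y) atTop
      (𝓝 (∑' y, excursionMeasure K z (⋃ n, T n) y)) := by
  have hmono : Monotone fun n => excursionMeasure K z (T n) := fun _ _ h =>
    excursionMeasure_mono (hT h)
  rw [← tsum_congr (iSup_excursionMeasure · hT), ENNReal.tsum_iSup_of_monotone hmono]
  exact tendsto_atTop_iSup fun _ _ h => ENNReal.tsum_le_tsum (hmono h)

end Excursion

def IsStationaryDistribution (P : S → S → ℝ) (π : S → ℝ) : Prop :=
  (∀ x, 0 ≤ π x) ∧ HasSum π 1 ∧ ∀ y, HasSum (fun x => π x * P x y) (π y)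

namespace IsStationaryDistribution

variable {π : S → ℝ} (hπ : IsStationaryDistribution P π)
include hπ

theorem tsum_ofReal : ∑' x, ENNReal.ofReal (π x) = 1 := by
  rw [← ENNReal.ofReal_tsum_of_nonneg hπ.1 hπ.2.1.summable, hπ.2.1.tsum_eq, ENNReal.ofReal_one]

theorem tsum_ofReal_mul_kernelOf (hP : ∀ x y, 0 ≤ P x y) (y : S) :
    ∑' x, ENNReal.ofReal (π x) * kernelOf P x y = ENNReal.ofReal (π y) := by
  simp only [kernelOf, ← ENNReal.ofReal_mul (hπ.1 _)]
  rw [← ENNReal.ofReal_tsum_of_nonneg (fun x => mul_nonneg (hπ.1 x) (hP x y))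
    (hπ.2.2 y).summable, (hπ.2.2 y).tsum_eq]

theorem ofReal_pos (hP : ∀ x y, 0 ≤ P x y) (hirr : IsIrreducibleMatrix P) (z : S) :
    0 < ENNReal.ofReal (π z) := by
  refine pos_iff_ne_zero.2 fun hz => ?_
  have hzero : ∀ x, ENNReal.ofReal (π x) = 0 := fun x =>
    let ⟨_, hn⟩ := hirr x z
    eq_zero_of_stepIter_ne_zero hP (fun y => (hπ.tsum_ofReal_mul_kernelOf hP y).le) hn.ne' hz
  simpa [hzero] using hπ.tsum_ofReal

theorem killedOccupation_ne_top (hP : ∀ x y, 0 ≤ P x y) (hirr : IsIrreducibleMatrix P)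
    {z : S} {T : Set S} (hz : z ∉ T) (y : S) : killedOccupation (kernelOf P) z T y ≠ ∞ := by
  intro htop
  have hle := mul_killedOccupation_le hz (fun y => (hπ.tsum_ofReal_mul_kernelOf hP y).le) y
  rw [htop, ENNReal.mul_top (hπ.ofReal_pos hP hirr z).ne', top_le_iff] at hle
  exact ENNReal.ofReal_ne_top hle

variable [DecidableEq S]

theorem ofReal_eq_mul_excursionMeasure (hP : IsStochasticMatrix P) (hirr : IsIrreducibleMatrix P)
    (z x : S) :
    ENNReal.ofReal (π x) = ENNReal.ofReal (π z) * excursionMeasure (kernelOf P) z {z}ᶜ x := by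
  have hz : z ∉ ({z}ᶜ : Set S) := fun h => h rfl
  have hle : ∀ x, ENNReal.ofReal (π z) * excursionMeasure (kernelOf P) z {z}ᶜ x ≤
      ENNReal.ofReal (π x) := by
    intro x
    by_cases hx : x = z
    · simp [excursionMeasure, hx]
    · simpa [excursionMeasure, hx] using
        mul_killedOccupation_le hz (fun y => (hπ.tsum_ofReal_mul_kernelOf hP.1 y).le) x
  have hρ : ∀ y ≠ z, ∑' x, ENNReal.ofReal (π z) * excursionMeasure (kernelOf P) z {z}ᶜ x *
      kernelOf P x y = ENNReal.ofReal (π z) * excursionMeasure (kernelOf P) z {z}ᶜ y := by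
    intro y hy
    simp only [mul_assoc, ENNReal.tsum_mul_left, tsum_excursionMeasure_mul hz]
    conv_rhs => rw [excursionMeasure, if_neg hy, killedOccupation_eq,
      Set.indicator_of_mem (Set.mem_compl_singleton_iff.2 hy)]
  refine (congrFun (hirr.eq_of_le hP (hπ.tsum_ofReal_mul_kernelOf hP.1) ?_ hle ?_ hρ) x).symm
  · simp [hπ.tsum_ofReal]
  · simp [excursionMeasure]

theorem tsum_excursionMeasure_eq_inv (hP : IsStochasticMatrix P) (hirr : IsIrreducibleMatrix P)
    (z : S) : ∑' y, excursionMeasure (kernelOf P) z {z}ᶜ y = (ENNReal.ofReal (π z))⁻¹ := by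
  refine ENNReal.eq_inv_of_mul_eq_one_left ?_
  rw [mul_comm, ← ENNReal.tsum_mul_left, ← hπ.tsum_ofReal]
  exact tsum_congr fun x => (hπ.ofReal_eq_mul_excursionMeasure hP hirr z x).symm

theorem excursionMeasure_div_tsum (hP : IsStochasticMatrix P) (hirr : IsIrreducibleMatrix P)
    (z x : S) :
    excursionMeasure (kernelOf P) z {z}ᶜ x / ∑' y, excursionMeasure (kernelOf P) z {z}ᶜ y =
      ENNReal.ofReal (π x) := by
  rw [hπ.tsum_excursionMeasure_eq_inv hP hirr, div_eq_mul_inv, inv_inv, mul_comm,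
    ← hπ.ofReal_eq_mul_excursionMeasure hP hirr]

theorem tendsto_excursionMeasure_div_tsum (hP : IsStochasticMatrix P)
    (hirr : IsIrreducibleMatrix P) {z : S} {T : ℕ → Set S} (hT : Monotone T)
    (hU : ⋃ n, T n = {z}ᶜ) (x : S) :
    Tendsto (fun n => excursionMeasure (kernelOf P) z (T n) x /
      ∑' y, excursionMeasure (kernelOf P) z (T n) y) atTop (𝓝 (ENNReal.ofReal (π x))) := by
  have hw := tendsto_excursionMeasure (K := kernelOf P) (z := z) hT x
  have hs := tendsto_tsum_excursionMeasure (K := kernelOf P) (z := z) hT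
  rw [hU] at hw hs
  rw [hπ.tsum_excursionMeasure_eq_inv hP hirr] at hs
  have hlim := ENNReal.Tendsto.div hw (Or.inr (ENNReal.inv_ne_zero.2 ENNReal.ofReal_ne_top)) hs
    (Or.inl (ENNReal.inv_ne_top.2 (hπ.ofReal_pos hP.1 hirr z).ne'))
  rwa [← hπ.tsum_excursionMeasure_eq_inv hP hirr, hπ.excursionMeasure_div_tsum hP hirr] at hlim

end IsStationaryDistribution

section Truncation

open scoped Matrix

variable [DecidableEq S]

/-- A left null vector of `I - B̃` gives, through its absolute values, a subinvariant measure of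
finite mass vanishing at `z`. -/
theorem IsIrreducibleMatrix.eq_zero_of_vecMul_one_sub_trB (hP : IsStochasticMatrix P)
    (hirr : IsIrreducibleMatrix P) {z : S} {A : Finset S} {v : ↥(A.erase z) → ℝ}
    (hv : v ᵥ* (1 - trB P z A) = 0) : v = 0 := by
  have hfix : ∀ j, v j = ∑ i, v i * P i j := fun j => by
    have := congrFun hv j
    simp only [Matrix.vecMul_sub, Matrix.vecMul_one, Pi.sub_apply, Pi.zero_apply] at this
    rw [sub_eq_zero.1 this]
    rfl
  let m : S → ℝ≥0∞ := fun y => if hy : y ∈ A.erase z then ENNReal.ofReal |v ⟨y, hy⟩| else 0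
  have hsum : ∀ g : S → ℝ≥0∞, ∑' x, m x * g x = ∑ i : ↥(A.erase z), ENNReal.ofReal |v i| * g i := by
    intro g
    rw [tsum_eq_sum (s := A.erase z) fun x hx => by simp only [m, dif_neg hx, zero_mul],
      ← Finset.sum_coe_sort]
    exact Finset.sum_congr rfl fun i _ => by simp only [m, dif_pos i.2]
  have hle : ∀ y, m y ≤ ∑' x, m x * kernelOf P x y := by
    intro y
    rw [hsum]
    by_cases hy : y ∈ A.erase z
    · simp only [m, dif_pos hy, kernelOf, ← ENNReal.ofReal_mul (abs_nonneg _)]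
      rw [← ENNReal.ofReal_sum_of_nonneg fun i _ => mul_nonneg (abs_nonneg _) (hP.1 _ _),
        hfix ⟨y, hy⟩]
      refine ENNReal.ofReal_le_ofReal ((Finset.abs_sum_le_sum_abs _ _).trans_eq ?_)
      exact Finset.sum_congr rfl fun i _ => by rw [abs_mul, abs_of_nonneg (hP.1 _ _)]
    · simp only [m, dif_neg hy, zero_le]
  have hfin : ∑' x, m x ≠ ∞ := by
    simpa using (hsum fun _ => 1).trans_ne (ENNReal.sum_ne_top.2 fun _ _ => by simp)
  have hzero := hirr.eq_zero_of_le_tsum_mul hP hfin hle (z := z) (by simp [m])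
  ext i
  have hi := congrFun hzero i
  simp only [m, dif_pos i.2, Pi.zero_apply, ENNReal.ofReal_eq_zero, abs_nonpos_iff] at hi
  exact hi

theorem IsIrreducibleMatrix.isUnit_one_sub_trB (hP : IsStochasticMatrix P)
    (hirr : IsIrreducibleMatrix P) (z : S) (A : Finset S) : IsUnit (1 - trB P z A) := by
  rw [← Matrix.vecMul_injective_iff_isUnit]
  intro v w hvw
  exact sub_eq_zero.1 (hirr.eq_zero_of_vecMul_one_sub_trB hP (by
    rw [Matrix.sub_vecMul]
    exact sub_eq_zero.2 hvw))

theorem vecMul_trNu_inv (hP : IsStochasticMatrix P) (hirr : IsIrreducibleMatrix P) {z : S}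
    {A : Finset S} (hfin : ∀ y, killedOccupation (kernelOf P) z ↑(A.erase z) y ≠ ∞) :
    trNu P z A ᵥ* (1 - trB P z A)⁻¹ =
      fun j : ↥(A.erase z) => (killedOccupation (kernelOf P) z ↑(A.erase z) j).toReal := by
  set occ := killedOccupation (kernelOf P) z ↑(A.erase z) with hocc
  have hrec : ∀ j : ↥(A.erase z),
      occ j = kernelOf P z j + ∑ i : ↥(A.erase z), occ i * kernelOf P i j := by
    intro j
    conv_lhs => rw [hocc, killedOccupation_eq, Set.indicator_of_mem (Finset.mem_coe.2 j.2)]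
    rw [tsum_eq_sum (s := A.erase z) fun x hx => by
      rw [killedOccupation_of_notMem z (Finset.mem_coe.not.2 hx), zero_mul]]
    rw [← Finset.sum_coe_sort]
  have hkey : (fun j : ↥(A.erase z) => (occ j).toReal) ᵥ* (1 - trB P z A) = trNu P z A := by
    ext j
    have h := congrArg ENNReal.toReal (hrec j)
    simp only [kernelOf] at h
    have hterm : ∀ i : ↥(A.erase z), occ i * ENNReal.ofReal (P i j) ≠ ∞ := fun i =>
      ENNReal.mul_ne_top (hfin i) ENNReal.ofReal_ne_top
    rw [ENNReal.toReal_add ENNReal.ofReal_ne_top (ENNReal.sum_ne_top.2 fun i _ => hterm i),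
      ENNReal.toReal_sum fun i _ => hterm i] at h
    simp only [ENNReal.toReal_mul, ENNReal.toReal_ofReal (hP.1 _ _)] at h
    simp only [Matrix.vecMul_sub, Matrix.vecMul_one, Pi.sub_apply, trNu]
    rw [h]
    simp [Matrix.vecMul, dotProduct, trB]
  have hdet := (Matrix.isUnit_iff_isUnit_det _).1 (hirr.isUnit_one_sub_trB hP z A)
  rw [← hkey, Matrix.vecMul_vecMul, Matrix.mul_nonsing_inv _ hdet, Matrix.vecMul_one]

theorem trPi_eq_toReal_div (hP : IsStochasticMatrix P) (hirr : IsIrreducibleMatrix P) {z : S}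
    {A : Finset S} (hfin : ∀ y, killedOccupation (kernelOf P) z ↑(A.erase z) y ≠ ∞) (x : S) :
    trPi P z A x = (excursionMeasure (kernelOf P) z ↑(A.erase z) x /
      ∑' y, excursionMeasure (kernelOf P) z ↑(A.erase z) y).toReal := by
  have hz : z ∉ (↑(A.erase z) : Set S) := A.notMem_erase z
  have hD : 1 + (trNu P z A ᵥ* (1 - trB P z A)⁻¹) ⬝ᵥ trE z A =
      (∑' y, excursionMeasure (kernelOf P) z ↑(A.erase z) y).toReal := by
    rw [vecMul_trNu_inv hP hirr hfin, tsum_excursionMeasure hz,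
      tsum_eq_sum (s := A.erase z) fun y hy => killedOccupation_of_notMem z hy,
      ENNReal.toReal_add ENNReal.one_ne_top (ENNReal.sum_ne_top.2 fun i _ => hfin i),
      ENNReal.toReal_sum fun i _ => hfin i, ← Finset.sum_coe_sort]
    simp [dotProduct, trE]
  simp only [trPi, hD]
  split_ifs with hxz hx
  · simp [excursionMeasure, hxz]
  · simp [vecMul_trNu_inv hP hirr hfin, excursionMeasure, hxz]
  · rw [excursionMeasure, if_neg hxz, killedOccupation_of_notMem z hx, ENNReal.zero_div,
      ENNReal.toReal_zero]

end Truncation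

end MCTrunc

open MCTrunc in
theorem trPi_tendsto_stationary_general
    {S : Type*} [DecidableEq S]
    (P : S → S → ℝ) (z : S)
    (hP : IsStochasticMatrix P) (hirr : IsIrreducibleMatrix P)
    (π : S → ℝ) (hπ0 : ∀ x, 0 ≤ π x) (hπ1 : HasSum π 1)
    (hstat : ∀ y, HasSum (fun x => π x * P x y) (π y))
    (A : ℕ → Finset S) (hmono : Monotone A)
    (hcover : ∀ x : S, ∃ n, x ∈ A n) :
    ∀ x : S, Filter.Tendsto (fun n => trPi P z (A n) x) Filter.atTop (nhds (π x)) := by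
  intro x
  have hπ : IsStationaryDistribution P π := ⟨hπ0, hπ1, hstat⟩
  have hT : Monotone fun n => (↑((A n).erase z) : Set S) := fun _ _ h =>
    Finset.coe_subset.2 (Finset.erase_subset_erase z (hmono h))
  have hU : ⋃ n, (↑((A n).erase z) : Set S) = {z}ᶜ := by
    ext y
    simp only [Set.mem_iUnion, Finset.coe_erase, Set.mem_sdiff, Finset.mem_coe,
      Set.mem_singleton_iff, Set.mem_compl_iff]
    exact ⟨fun ⟨_, _, hy⟩ => hy, fun hy => (hcover y).imp fun _ hn => ⟨hn, hy⟩⟩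
  have hfin : ∀ n y, killedOccupation (kernelOf P) z ↑((A n).erase z) y ≠ ∞ := fun n =>
    hπ.killedOccupation_ne_top hP.1 hirr ((A n).notMem_erase z)
  rw [← ENNReal.toReal_ofReal (hπ0 x)]
  exact ((ENNReal.tendsto_toReal ENNReal.ofReal_ne_top).comp
    (hπ.tendsto_excursionMeasure_div_tsum hP hirr hT hU x)).congr
      fun n => (trPi_eq_toReal_div hP hirr (hfin n) x).symm

open MCTrunc in
/-- Proposition 1: for an irreducible positive recurrent chain,
the truncation approximations converge pointwise to the stationary distribution. -/
theorem trPi_tendsto_stationary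
    {S : Type*} [Countable S] [DecidableEq S]
    [MeasurableSpace S] [MeasurableSingletonClass S]
    (P : S → S → ℝ) (μ : S → MeasureTheory.Measure (ℕ → S)) (z : S)
    (hP : IsStochasticMatrix P) (hirr : IsIrreducibleMatrix P)
    (hμ : IsMarkovChain P μ) (hpos : IsPositiveRecurrent μ)
    (π : S → ℝ) (hπ0 : ∀ x, 0 ≤ π x) (hπ1 : HasSum π 1)
    (hstat : ∀ y, HasSum (fun x => π x * P x y) (π y))
    (hrep : ∀ y : S,
      ENNReal.ofReal (π y) * (∫⁻ ω, sumBefore (fun _ => 1) (retTime z ω) ω ∂ μ z)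
        = ∫⁻ ω, sumBefore (fun s => if s = y then 1 else 0) (retTime z ω) ω ∂ μ z)
    (A : ℕ → Finset S) (hzA : z ∈ A 0) (hmono : Monotone A)
    (hcover : ∀ x : S, ∃ n, x ∈ A n) :
    ∀ x : S, Filter.Tendsto (fun n => trPi P z (A n) x) Filter.atTop (nhds (π x)) :=
  trPi_tendsto_stationary_general P z hP hirr π hπ0 hπ1 hstat A hmono hcover
end
end

section
/- (Remark 2) Suppose X is irreducible and null recurrent, and let π be the (unique up to multiplicative constant) nonnegative solution of π = πP, which satisfies π(x)/π(y) = E_z[∑_{j=0}^{τ(z)−1} I(X_j = x)] / E_z[∑_{j=0}^{τ(z)−1} I(X_j = y)] with both sides positive and finite. If (A_n : n ≥ 1) are finite truncation sets with z ∈ A_1 and A_n ↗ S, then for all x, y ∈ S, π̃_n(x)/π̃_n(y) → π(x)/π(y) as n → ∞. -/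
open MeasureTheory ENNReal Filter

noncomputable section

/-!
For `x ∈ A' = A \ {z}`, `(ν̃ B̃ᵏ)(x)` is the probability, starting from `z`, that the chain
stays in `A'` at times `1, …, k + 1` and is at `x` at time `k + 1`. Summing over `k`,
`(ν̃ (I - B̃)⁻¹)(x)` is the expected number of visits to `x` before `τ(z)` along paths confined
to `A'`. As `A_n ↗ S` these increase, by monotone convergence, to the expected number of visits
to `x` before `τ(z)`, which is finite, positive and proportional to `π(x)`; the normalisation of
`π̃_n` cancels in ratios.

No spectral estimate is needed for the Neumann series: its terms are dominated by the finite
visit counts, and `I - B̃` is invertible by a maximum principle (the set where `|v|` is maximal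
for a `B̃`-harmonic `v` would be closed under `P` and miss `z`, contradicting irreducibility).
-/

open scoped Topology Matrix

namespace MCTrunc

lemma vecMul_pow_nonneg {ι : Type*} [Fintype ι] [DecidableEq ι] {ν : ι → ℝ} {B : Matrix ι ι ℝ}
    (hν : 0 ≤ ν) (hB : ∀ i j, 0 ≤ B i j) (k : ℕ) : 0 ≤ ν ᵥ* B ^ k :=
  fun j => Finset.sum_nonneg fun i _ => mul_nonneg (hν i) (Matrix.pow_apply_nonneg hB k i j)

lemma vecMul_inv_one_sub_eq_tsum {ι : Type*} [Fintype ι] [DecidableEq ι] {B : Matrix ι ι ℝ}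
    (hB : IsUnit (1 - B).det) (ν : ι → ℝ) (hs : ∀ x, Summable fun k => (ν ᵥ* B ^ k) x) :
    ν ᵥ* (1 - B)⁻¹ = fun x => ∑' k, (ν ᵥ* B ^ k) x := by
  set u : ι → ℝ := fun x => ∑' k, (ν ᵥ* B ^ k) x
  have hshift : ∀ x, HasSum (fun k => (ν ᵥ* B ^ (k + 1)) x) ((u ᵥ* B) x) := by
    intro x
    simp_rw [pow_succ, ← Matrix.vecMul_vecMul]
    exact hasSum_sum fun w _ => (hs w).hasSum.mul_right (B w x)
  have hfix : u ᵥ* (1 - B) = ν := by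
    ext x
    have h := (hasSum_nat_add_iff (f := fun k => (ν ᵥ* B ^ k) x) 1).1 (hshift x)
    rw [Finset.sum_range_one, pow_zero, Matrix.vecMul_one] at h
    rw [Matrix.vecMul_sub, Matrix.vecMul_one, Pi.sub_apply,
      show u x = _ from (hs x).hasSum.unique h]
    ring
  rw [← hfix, Matrix.vecMul_vecMul, Matrix.mul_nonsing_inv _ hB, Matrix.vecMul_one]

lemma tendsto_tsum_measure_iUnion {α : Type*} [MeasurableSpace α] (ν : Measure α)
    {s : ℕ → ℕ → Set α} (hs : ∀ k, Monotone fun n => s n k) :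
    Tendsto (fun n => ∑' k, ν (s n k)) atTop (𝓝 (∑' k, ν (⋃ n, s n k))) := by
  simp_rw [← lintegral_count]
  exact lintegral_tendsto_of_tendsto_of_monotone (fun _ => (measurable_of_countable _).aemeasurable)
    (ae_of_all _ fun k _ _ h => measure_mono (hs k h))
    (ae_of_all _ fun k => tendsto_measure_iUnion_atTop (hs k))

section Paths

variable {S : Type*}

def visitWithin (T : Set S) (x : S) (j : ℕ) : Set (ℕ → S) :=
  {ω | (∀ i ∈ Finset.Icc 1 j, ω i ∈ T) ∧ ω j = x}

lemma visitWithin_mono {T T' : Set S} (h : T ⊆ T') (x : S) (j : ℕ) :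
    visitWithin T x j ⊆ visitWithin T' x j :=
  fun _ hω => ⟨fun i hi => h (hω.1 i hi), hω.2⟩

lemma iUnion_visitWithin {T : ℕ → Set S} (hT : Monotone T) (x : S) (j : ℕ) :
    ⋃ n, visitWithin (T n) x j = visitWithin (⋃ n, T n) x j := by
  refine (Set.iUnion_subset fun n => visitWithin_mono (Set.subset_iUnion T n) x j).antisymm ?_
  rintro ω ⟨hωT, hωx⟩
  have hev : ∀ᶠ n in atTop, ∀ i ∈ Finset.Icc 1 j, ω i ∈ T n := by
    refine (Filter.eventually_all_finset _).2 fun i hi => ?_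
    obtain ⟨m, hm⟩ := Set.mem_iUnion.1 (hωT i hi)
    exact Filter.eventually_atTop.2 ⟨m, fun n hn => hT hn hm⟩
  obtain ⟨n, hn⟩ := hev.exists
  exact Set.mem_iUnion.2 ⟨n, hn, hωx⟩

lemma natCast_lt_retTime_iff (z : S) (ω : ℕ → S) (j : ℕ) :
    (j : ℕ∞) < retTime z ω ↔ ∀ i ∈ Finset.Icc 1 j, ω i ≠ z := by
  rw [← ENat.add_one_le_iff (ENat.natCast_ne_top j), retTime, le_sInf_iff]
  simp only [Set.mem_ofPred_eq, forall_exists_index, and_imp, Finset.mem_Icc]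
  constructor
  · intro h i hi hij hiz
    have := h i i rfl hi hiz
    norm_cast at this
    omega
  · rintro h m n rfl hn hnz
    have : ¬ n ≤ j := fun hnj => h n hn hnj hnz
    norm_cast
    omega

lemma sumBefore_indicator_eq_tsum [DecidableEq S] (z x : S) (ω : ℕ → S) :
    sumBefore (fun s => if s = x then 1 else 0) (retTime z ω) ω
      = ∑' j, (visitWithin {s | s ≠ z} x j).indicator 1 ω := by
  unfold sumBefore sumOver
  refine tsum_congr fun j => ?_
  simp only [visitWithin, natCast_lt_retTime_iff, Set.indicator_apply, Set.mem_ofPred_eq]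
  split_ifs <;> simp_all

def prefixCylinder (n : ℕ) (p : ℕ → S) : Set (ℕ → S) := {ω | ∀ i ≤ n, ω i = p i}

lemma prefixCylinder_succ (n : ℕ) (p : ℕ → S) :
    prefixCylinder (n + 1) p = prefixCylinder n p ∩ {ω | ω (n + 1) = p (n + 1)} := by
  ext ω
  simp only [prefixCylinder, Set.mem_inter_iff, Set.mem_ofPred_eq]
  exact ⟨fun h => ⟨fun i hi => h i (by omega), h _ le_rfl⟩,
    fun h i hi => (Nat.le_succ_iff.1 hi).elim (h.1 i) fun e => e ▸ h.2⟩

lemma mem_of_stepIter_ne_zero {P : S → S → ℝ} {K : Set S}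
    (hK : ∀ s ∈ K, ∀ t, P s t ≠ 0 → t ∈ K) (n : ℕ) {x y : S} (hx : x ∈ K)
    (hxy : stepIter P n x y ≠ 0) : y ∈ K := by
  induction n generalizing y with
  | zero =>
    by_cases h : x = y
    · exact h ▸ hx
    · simp [stepIter, h] at hxy
  | succ n ih =>
    obtain ⟨w, hw⟩ : ∃ w, stepIter P n x w * P w y ≠ 0 := by
      by_contra! h
      exact hxy (by simp [stepIter, h])
    exact hK w (ih (left_ne_zero_of_mul hw)) y (right_ne_zero_of_mul hw)

end Paths

section MarkovChain

variable {S : Type*} [MeasurableSpace S] {P : S → S → ℝ} {μ : S → Measure (ℕ → S)}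

lemma IsMarkovChain.measure_start (hμ : IsMarkovChain P μ) (a : S) :
    μ a {ω | ω 0 = a} = 1 := by
  simpa using hμ.2 0 fun _ => a

variable [MeasurableSingletonClass S]

lemma measurableSet_prefixCylinder (n : ℕ) (p : ℕ → S) :
    MeasurableSet (prefixCylinder n p) := by
  simp only [prefixCylinder, Set.ofPred_forall]
  exact MeasurableSet.iInter fun i => MeasurableSet.iInter fun _ =>
    (measurableSet_singleton (p i)).preimage (measurable_pi_apply i)

lemma IsMarkovChain.measure_start_compl (hμ : IsMarkovChain P μ) (a : S) :
    μ a {ω | ω 0 = a}ᶜ = 0 := by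
  have := hμ.1 a
  have hm : MeasurableSet {ω : ℕ → S | ω 0 = a} :=
    (measurableSet_singleton a).preimage (measurable_pi_apply 0)
  rw [prob_compl_eq_zero_iff hm, hμ.measure_start]

variable [Countable S]

lemma measurableSet_visitWithin (T : Set S) (x : S) (j : ℕ) :
    MeasurableSet (visitWithin T x j) := by
  simp only [visitWithin, Set.ofPred_and, Set.ofPred_forall]
  exact (Finset.measurableSet_biInter _ fun i _ =>
      (Set.to_countable T).measurableSet.preimage (measurable_pi_apply i)).inter
    ((measurableSet_singleton x).preimage (measurable_pi_apply j))

lemma lintegral_sumBefore_indicator [DecidableEq S] (ν : Measure (ℕ → S)) (z x : S) :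
    ∫⁻ ω, sumBefore (fun s => if s = x then 1 else 0) (retTime z ω) ω ∂ν
      = ∑' j, ν (visitWithin {s | s ≠ z} x j) := by
  simp_rw [sumBefore_indicator_eq_tsum]
  rw [lintegral_tsum fun j =>
    (measurable_one.indicator (measurableSet_visitWithin _ x j)).aemeasurable]
  simp_rw [lintegral_indicator_one (measurableSet_visitWithin _ x _)]

lemma IsMarkovChain.measure_inter_eq_mul (hμ : IsMarkovChain P μ)
    (hP₀ : ∀ x y, 0 ≤ P x y) {n : ℕ} {E : Set (ℕ → S)}
    (hE : ∀ ω ω', (∀ i ≤ n, ω i = ω' i) → ω ∈ E → ω' ∈ E) {w : S}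
    (hw : ∀ ω ∈ E, ω n = w)
    (a x : S) :
    μ a (E ∩ {ω | ω (n + 1) = x}) = μ a E * ENNReal.ofReal (P w x) := by
  -- `E ∩ {X₀ = a}` is the disjoint union of the cylinders of its prefixes, extended by `x`
  let ext : (Fin (n + 1) → S) → ℕ → S :=
    fun q i => if h : i < n + 1 then q ⟨i, h⟩ else x
  have hext_lt : ∀ q i (hi : i ≤ n), ext q i = q ⟨i, Nat.lt_succ_of_le hi⟩ :=
    fun q i hi => dif_pos (Nat.lt_succ_of_le hi)
  have hext_last : ∀ q, ext q (n + 1) = x := fun q => dif_neg (lt_irrefl _)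
  let Q : Set (Fin (n + 1) → S) := {q | ext q ∈ E ∧ q 0 = a}
  have hdisj : ∀ m ≥ n, Q.PairwiseDisjoint fun q => prefixCylinder m (ext q) := by
    intro m hm q _ q' _ hqq'
    obtain ⟨i, hi⟩ := Function.ne_iff.1 hqq'
    refine Set.disjoint_left.2 fun ω hω hω' => hi ?_
    have hin : (i : ℕ) ≤ n := Nat.lt_succ_iff.1 i.2
    have h := (hω i (by omega)).symm.trans (hω' i (by omega))
    rwa [hext_lt q i hin, hext_lt q' i hin] at h
  have hunion : E ∩ {ω | ω 0 = a} = ⋃ q ∈ Q, prefixCylinder n (ext q) := by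
    ext ω
    simp only [Set.mem_inter_iff, Set.mem_iUnion, Set.mem_ofPred_eq, prefixCylinder]
    constructor
    · rintro ⟨hωE, hω0⟩
      have hagree : ∀ i ≤ n, ω i = ext (fun i => ω i) i :=
        fun i hi => (hext_lt (fun i => ω i) i hi).symm
      exact ⟨fun i => ω i, ⟨hE ω _ hagree hωE, hω0⟩, hagree⟩
    · rintro ⟨q, ⟨hqE, hq0⟩, hωq⟩
      exact ⟨hE _ ω (fun i hi => (hωq i hi).symm) hqE, (hωq 0 n.zero_le).trans hq0⟩
  have hcyl : ∀ q ∈ Q, μ a (prefixCylinder (n + 1) (ext q))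
      = μ a (prefixCylinder n (ext q)) * ENNReal.ofReal (P w x) := by
    rintro q ⟨hqE, hq0⟩
    have h0 : ext q 0 = a := hq0
    rw [← h0, prefixCylinder, prefixCylinder, hμ.2, hμ.2, Finset.prod_range_succ, hext_last,
      hw _ hqE, ENNReal.ofReal_mul (Finset.prod_nonneg fun _ _ => hP₀ _ _)]
  have hQ : Q.Countable := Set.to_countable Q
  calc μ a (E ∩ {ω | ω (n + 1) = x})
      = μ a (E ∩ {ω | ω 0 = a} ∩ {ω | ω (n + 1) = x}) := by
        rw [Set.inter_right_comm, measure_inter_conull (hμ.measure_start_compl a)]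
    _ = ∑' q : Q, μ a (prefixCylinder (n + 1) (ext q)) := by
        rw [hunion, Set.iUnion₂_inter, ← measure_biUnion hQ (hdisj _ n.le_succ)
          fun q _ => measurableSet_prefixCylinder _ _]
        congr! 3 with q
        rw [prefixCylinder_succ, hext_last]
    _ = ∑' q : Q, μ a (prefixCylinder n (ext q)) * ENNReal.ofReal (P w x) :=
        tsum_congr fun q => hcyl q q.2
    _ = μ a E * ENNReal.ofReal (P w x) := by
        rw [ENNReal.tsum_mul_right, ← measure_biUnion hQ (hdisj _ le_rfl)
          fun q _ => measurableSet_prefixCylinder _ _, ← hunion,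
          measure_inter_conull (hμ.measure_start_compl a)]

lemma IsMarkovChain.measure_visitWithin_one (hμ : IsMarkovChain P μ)
    (hP₀ : ∀ x y, 0 ≤ P x y) {T : Set S} {x : S} (hx : x ∈ T) (a : S) :
    μ a (visitWithin T x 1) = ENNReal.ofReal (P a x) := by
  have hset : visitWithin T x 1 = {ω | ω 1 = x} := by
    ext ω
    simp only [visitWithin, Finset.Icc_self, Finset.mem_singleton, forall_eq, Set.mem_ofPred_eq]
    exact ⟨And.right, fun h => ⟨h ▸ hx, h⟩⟩
  have hstart := hμ.measure_inter_eq_mul hP₀ (n := 0) (E := {ω | ω 0 = a})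
    (fun ω ω' h hω => (h 0 le_rfl).symm.trans hω) (fun _ h => h) a x
  rw [hμ.measure_start, one_mul, Set.inter_comm,
    measure_inter_conull (hμ.measure_start_compl a)] at hstart
  rw [hset, hstart]

lemma IsMarkovChain.measure_visitWithin_add_two (hμ : IsMarkovChain P μ)
    (hP₀ : ∀ x y, 0 ≤ P x y) (T : Finset S) {x : S} (hx : x ∈ T) (a : S) (k : ℕ) :
    μ a (visitWithin T x (k + 2))
      = ∑ w ∈ T, μ a (visitWithin T w (k + 1)) * ENNReal.ofReal (P w x) := by
  have hset : visitWithin T x (k + 2)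
      = ⋃ w ∈ T, visitWithin T w (k + 1) ∩ {ω | ω (k + 2) = x} := by
    ext ω
    simp only [visitWithin, Finset.mem_Icc, Set.mem_iUnion, Set.mem_inter_iff,
      Set.mem_ofPred_eq, Finset.mem_coe]
    constructor
    · rintro ⟨hT, rfl⟩
      exact ⟨ω (k + 1), hT _ ⟨by omega, by omega⟩,
        ⟨fun i hi => hT i ⟨hi.1, by omega⟩, rfl⟩, rfl⟩
    · rintro ⟨w, -, ⟨hT, -⟩, rfl⟩
      refine ⟨fun i hi => ?_, rfl⟩
      rcases Nat.lt_or_ge i (k + 2) with hik | hik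
      · exact hT i ⟨hi.1, by omega⟩
      · rwa [show i = k + 2 by omega]
  have hdisj : (T : Set S).PairwiseDisjoint
      fun w => visitWithin T w (k + 1) ∩ {ω | ω (k + 2) = x} :=
    fun w _ w' _ hww' => Set.disjoint_left.2 fun ω hω hω' => hww' (hω.1.2.symm.trans hω'.1.2)
  rw [hset, measure_biUnion_finset hdisj fun w _ => (measurableSet_visitWithin _ w _).inter
    ((measurableSet_singleton x).preimage (measurable_pi_apply _))]
  refine Finset.sum_congr rfl fun w _ => hμ.measure_inter_eq_mul hP₀ ?_ (fun ω h => h.2) a x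
  intro ω ω' h ⟨hT, hw⟩
  exact ⟨fun i hi => h i (Finset.mem_Icc.1 hi).2 ▸ hT i hi, h _ le_rfl ▸ hw⟩

lemma IsMarkovChain.measure_visitWithin_eq [DecidableEq S] (hμ : IsMarkovChain P μ)
    (hP₀ : ∀ x y, 0 ≤ P x y) (T : Finset S) (a : S) (k : ℕ) (x : T) :
    μ a (visitWithin T x (k + 1))
      = ENNReal.ofReal (((fun t : T => P a t) ᵥ* (Matrix.of fun s t : T => P s t) ^ k) x) := by
  induction k generalizing x with
  | zero => rw [pow_zero, Matrix.vecMul_one, hμ.measure_visitWithin_one hP₀ x.2]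
  | succ k ih =>
    have hnonneg := vecMul_pow_nonneg (B := Matrix.of fun s t : T => P s t)
      (fun t : T => hP₀ a t) (fun s t => hP₀ s t) k
    rw [hμ.measure_visitWithin_add_two hP₀ T x.2, ← Finset.sum_coe_sort T, pow_succ,
      ← Matrix.vecMul_vecMul]
    simp_rw [ih, ← ENNReal.ofReal_mul (hnonneg _)]
    rw [← ENNReal.ofReal_sum_of_nonneg fun w _ => mul_nonneg (hnonneg w) (hP₀ w x)]
    rfl

end MarkovChain

section Occupation

variable {S : Type*} [MeasurableSpace S] [DecidableEq S] {P : S → S → ℝ}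
  {μ : S → Measure (ℕ → S)}

def visitsBeforeReturn (μ : S → Measure (ℕ → S)) (z x : S) : ℝ≥0∞ :=
  ∫⁻ ω, sumBefore (fun s => if s = x then 1 else 0) (retTime z ω) ω ∂ μ z

lemma tendsto_tsum_visitWithin_erase (μ : S → Measure (ℕ → S)) {A : ℕ → Finset S}
    (hA : Monotone A) (hcover : ∀ x, ∃ n, x ∈ A n) (z x : S) :
    Tendsto (fun n => ∑' k, μ z (visitWithin ↑((A n).erase z) x (k + 1))) atTop
      (𝓝 (∑' k, μ z (visitWithin {s | s ≠ z} x (k + 1)))) := by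
  have hT : Monotone fun n => (↑((A n).erase z) : Set S) :=
    fun n m h => Finset.coe_subset.2 (Finset.erase_subset_erase z (hA h))
  have hU : ⋃ n, (↑((A n).erase z) : Set S) = {s | s ≠ z} := by
    ext s
    simp only [Set.mem_iUnion, Finset.coe_erase, Set.mem_sdiff, Finset.mem_coe,
      Set.mem_singleton_iff, Set.mem_ofPred_eq]
    exact ⟨fun ⟨_, _, h⟩ => h, fun h => (hcover s).imp fun _ hs => ⟨hs, h⟩⟩
  simpa only [iUnion_visitWithin hT, hU] using
    tendsto_tsum_measure_iUnion (μ z) fun k _ _ h => visitWithin_mono (hT h) x (k + 1)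

variable [MeasurableSingletonClass S] [Countable S]

lemma IsMarkovChain.visitsBeforeReturn_self (hμ : IsMarkovChain P μ) (z : S) :
    visitsBeforeReturn μ z z = 1 := by
  rw [visitsBeforeReturn, lintegral_sumBefore_indicator, tsum_eq_single 0]
  · simpa [visitWithin] using hμ.measure_start z
  · intro j hj
    convert measure_empty (μ := μ z)
    refine Set.eq_empty_of_forall_notMem fun ω hω => hω.1 j ?_ hω.2
    exact Finset.mem_Icc.2 ⟨Nat.one_le_iff_ne_zero.2 hj, le_rfl⟩

lemma IsMarkovChain.visitsBeforeReturn_eq_tsum (hμ : IsMarkovChain P μ) {z x : S}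
    (hxz : x ≠ z) :
    visitsBeforeReturn μ z x = ∑' k, μ z (visitWithin {s | s ≠ z} x (k + 1)) := by
  have h0 : μ z (visitWithin {s | s ≠ z} x 0) = 0 :=
    measure_mono_null (fun ω hω (h : ω 0 = z) => hxz (hω.2.symm.trans h))
      (hμ.measure_start_compl z)
  rw [visitsBeforeReturn, lintegral_sumBefore_indicator, tsum_eq_zero_add' ENNReal.summable, h0,
    zero_add]

end Occupation

section Truncation

variable {S : Type*} [DecidableEq S] {P : S → S → ℝ} {z : S} {A : Finset S}

lemma sum_trB_add_le_one (hP : IsStochasticMatrix P) (x : ↥(A.erase z)) {t : S}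
    (ht : t ∉ A.erase z) : ∑ y, trB P z A x y + P x t ≤ 1 := by
  have hsum : ∑ y, trB P z A x y = ∑ y ∈ A.erase z, P x y :=
    Finset.sum_coe_sort (A.erase z) (P x)
  rw [hsum, add_comm, ← Finset.sum_insert ht]
  exact sum_le_hasSum _ (fun y _ => hP.1 _ _) (hP.2 x)

lemma sum_trB_le_one (hP : IsStochasticMatrix P) (x : ↥(A.erase z)) :
    ∑ y, trB P z A x y ≤ 1 := by
  linarith [sum_trB_add_le_one hP x (Finset.notMem_erase z A), hP.1 x z]

/-- Maximum principle: `|v|` is subharmonic for the substochastic `B̃`, so at a maximum of `|v|`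
no mass of `P` can leave `A'` or reach a smaller value of `|v|`. -/
lemma exists_abs_eq_of_trB_mulVec_eq_self (hP : IsStochasticMatrix P)
    {v : ↥(A.erase z) → ℝ} (hv : trB P z A *ᵥ v = v) {x : ↥(A.erase z)}
    (hx : ∀ y, |v y| ≤ |v x|) (hx0 : v x ≠ 0) {t : S} (ht : P x t ≠ 0) :
    ∃ h : t ∈ A.erase z, |v ⟨t, h⟩| = |v x| := by
  set M := |v x|
  have hM : 0 < M := abs_pos.2 hx0
  have hPt : 0 < P x t := lt_of_le_of_ne (hP.1 _ _) (Ne.symm ht)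
  have hsub : M ≤ ∑ y, trB P z A x y * |v y| :=
    calc M = |(trB P z A *ᵥ v) x| := by rw [hv]
      _ ≤ ∑ y, |trB P z A x y * v y| := Finset.abs_sum_le_sum_abs _ _
      _ = ∑ y, trB P z A x y * |v y| := Finset.sum_congr rfl fun y _ => by
        rw [abs_mul, abs_of_nonneg (show 0 ≤ trB P z A x y from hP.1 _ _)]
  have hle : ∀ y, trB P z A x y * |v y| ≤ trB P z A x y * M :=
    fun y => mul_le_mul_of_nonneg_left (hx y) (hP.1 _ _)
  by_contra! hne
  have hlt : ∑ y, trB P z A x y * |v y| < M := by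
    by_cases htA : t ∈ A.erase z
    · calc ∑ y, trB P z A x y * |v y| < ∑ y, trB P z A x y * M :=
            Finset.sum_lt_sum (fun y _ => hle y) ⟨⟨t, htA⟩, Finset.mem_univ _,
              mul_lt_mul_of_pos_left (lt_of_le_of_ne (hx _) (hne htA)) hPt⟩
        _ = (∑ y, trB P z A x y) * M := (Finset.sum_mul _ _ _).symm
        _ ≤ M := mul_le_of_le_one_left hM.le (sum_trB_le_one hP x)
    · calc ∑ y, trB P z A x y * |v y| ≤ (∑ y, trB P z A x y) * M := by
            rw [Finset.sum_mul]; exact Finset.sum_le_sum fun y _ => hle y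
        _ ≤ (1 - P x t) * M := by
            gcongr; linarith [sum_trB_add_le_one hP x htA]
        _ < M := by nlinarith
  linarith

lemma eq_zero_of_trB_mulVec_eq_self (hP : IsStochasticMatrix P) (hirr : IsIrreducibleMatrix P)
    {v : ↥(A.erase z) → ℝ} (hv : trB P z A *ᵥ v = v) : v = 0 := by
  by_contra hv0
  obtain ⟨y₀, hy₀⟩ := Function.ne_iff.1 hv0
  obtain ⟨x, -, hx⟩ :=
    Finset.exists_max_image Finset.univ (fun y => |v y|) ⟨y₀, Finset.mem_univ _⟩
  have hx0 : v x ≠ 0 := fun h => hy₀ <| abs_nonpos_iff.1 <| by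
    simpa [h] using hx y₀ (Finset.mem_univ _)
  let K : Set S := {s | ∃ h : s ∈ A.erase z, |v ⟨s, h⟩| = |v x|}
  have hK : ∀ s ∈ K, ∀ t, P s t ≠ 0 → t ∈ K := by
    rintro s ⟨hs, hsx⟩ t ht
    obtain ⟨htA, htx⟩ := exists_abs_eq_of_trB_mulVec_eq_self hP hv (x := ⟨s, hs⟩)
      (fun y => hsx ▸ hx y (Finset.mem_univ _)) (abs_ne_zero.1 (hsx ▸ abs_ne_zero.2 hx0)) ht
    exact ⟨htA, htx.trans hsx⟩
  obtain ⟨n, hn⟩ := hirr x z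
  obtain ⟨hz, -⟩ := mem_of_stepIter_ne_zero hK n ⟨x.2, rfl⟩ hn.ne'
  exact Finset.notMem_erase z A hz

lemma isUnit_det_one_sub_trB (hP : IsStochasticMatrix P) (hirr : IsIrreducibleMatrix P) :
    IsUnit (1 - trB P z A).det := by
  rw [isUnit_iff_ne_zero, ne_eq, ← Matrix.exists_mulVec_eq_zero_iff]
  rintro ⟨v, hv0, hv⟩
  rw [Matrix.sub_mulVec, Matrix.one_mulVec, sub_eq_zero] at hv
  exact hv0 (eq_zero_of_trB_mulVec_eq_self hP hirr hv.symm)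

def trWeight (P : S → S → ℝ) (z : S) (A : Finset S) (x : S) : ℝ :=
  if x = z then 1
  else if hx : x ∈ A.erase z then (trNu P z A ᵥ* (1 - trB P z A)⁻¹) ⟨x, hx⟩
  else 0

lemma trPi_div_trPi (h : 0 ≤ trNu P z A ᵥ* (1 - trB P z A)⁻¹) (x y : S) :
    trPi P z A x / trPi P z A y = trWeight P z A x / trWeight P z A y := by
  set D := 1 + (trNu P z A ᵥ* (1 - trB P z A)⁻¹) ⬝ᵥ trE z A
  have hD : 0 < D := by
    have : 0 ≤ (trNu P z A ᵥ* (1 - trB P z A)⁻¹) ⬝ᵥ trE z A :=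
      Finset.sum_nonneg fun i _ => mul_nonneg (h i) zero_le_one
    linarith
  have hpi : ∀ x, trPi P z A x = trWeight P z A x / D := by
    intro x
    unfold trPi trWeight
    split_ifs <;> simp [D]
  rw [hpi, hpi, div_div_div_cancel_right₀ hD.ne']

end Truncation

section Limit

variable {S : Type*} [MeasurableSpace S] [MeasurableSingletonClass S] [Countable S]
  [DecidableEq S] {P : S → S → ℝ} {μ : S → Measure (ℕ → S)} {z : S}

lemma trNu_vecMul_inv_apply (hP : IsStochasticMatrix P) (hirr : IsIrreducibleMatrix P)
    (hμ : IsMarkovChain P μ) (hfin : ∀ x, visitsBeforeReturn μ z x ≠ ⊤) (A : Finset S)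
    (x : ↥(A.erase z)) :
    (trNu P z A ᵥ* (1 - trB P z A)⁻¹) x
      = (∑' k, μ z (visitWithin ↑(A.erase z) x (k + 1))).toReal := by
  have := hμ.1 z
  have hterm : ∀ k (y : ↥(A.erase z)),
      (trNu P z A ᵥ* trB P z A ^ k) y = (μ z (visitWithin ↑(A.erase z) y (k + 1))).toReal :=
    fun k y => by
      rw [hμ.measure_visitWithin_eq hP.1]
      exact (ENNReal.toReal_ofReal (vecMul_pow_nonneg (ν := trNu P z A) (B := trB P z A)
        (fun _ => hP.1 _ _) (fun _ _ => hP.1 _ _) k y)).symm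
  have hne_top :
      ∀ y : ↥(A.erase z), ∑' k, μ z (visitWithin ↑(A.erase z) y (k + 1)) ≠ ⊤ := by
    intro y
    refine ne_top_of_le_ne_top (hfin y) ?_
    rw [hμ.visitsBeforeReturn_eq_tsum (Finset.mem_erase.1 y.2).1]
    exact ENNReal.tsum_le_tsum fun k => measure_mono <|
      visitWithin_mono (fun s hs => (Finset.mem_erase.1 hs).1) _ _
  rw [vecMul_inv_one_sub_eq_tsum (isUnit_det_one_sub_trB hP hirr) _ fun y => by
    simp_rw [hterm]; exact ENNReal.summable_toReal (hne_top y)]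
  simp_rw [hterm]
  exact (ENNReal.tsum_toReal_eq fun _ => measure_ne_top _ _).symm

lemma trNu_vecMul_inv_nonneg (hP : IsStochasticMatrix P) (hirr : IsIrreducibleMatrix P)
    (hμ : IsMarkovChain P μ) (hfin : ∀ x, visitsBeforeReturn μ z x ≠ ⊤) (A : Finset S) :
    0 ≤ trNu P z A ᵥ* (1 - trB P z A)⁻¹ := fun x => by
  rw [trNu_vecMul_inv_apply hP hirr hμ hfin]
  exact ENNReal.toReal_nonneg

lemma tendsto_trWeight (hP : IsStochasticMatrix P) (hirr : IsIrreducibleMatrix P)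
    (hμ : IsMarkovChain P μ) (hfin : ∀ x, visitsBeforeReturn μ z x ≠ ⊤)
    {A : ℕ → Finset S} (hA : Monotone A) (hcover : ∀ x, ∃ n, x ∈ A n) (x : S) :
    Tendsto (fun n => trWeight P z (A n) x) atTop (𝓝 (visitsBeforeReturn μ z x).toReal) := by
  by_cases hxz : x = z
  · subst hxz
    simp only [trWeight, if_pos, hμ.visitsBeforeReturn_self, ENNReal.toReal_one]
    exact tendsto_const_nhds
  obtain ⟨n₀, hn₀⟩ := hcover x
  have hlim := tendsto_tsum_visitWithin_erase μ hA hcover z x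
  rw [← hμ.visitsBeforeReturn_eq_tsum hxz] at hlim
  refine ((ENNReal.tendsto_toReal (hfin x)).comp hlim).congr' ?_
  filter_upwards [eventually_ge_atTop n₀] with n hn
  have hx : x ∈ (A n).erase z := Finset.mem_erase.2 ⟨hxz, hA hn hn₀⟩
  simp only [Function.comp_apply, trWeight, if_neg hxz, dif_pos hx,
    trNu_vecMul_inv_apply hP hirr hμ hfin]

end Limit

end MCTrunc

open MCTrunc in
theorem trPi_ratio_tendsto_null_recurrent_general
    {S : Type*} [Countable S] [DecidableEq S]
    [MeasurableSpace S] [MeasurableSingletonClass S]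
    (P : S → S → ℝ) (μ : S → MeasureTheory.Measure (ℕ → S)) (z : S)
    (hP : IsStochasticMatrix P) (hirr : IsIrreducibleMatrix P)
    (hμ : IsMarkovChain P μ)
    (π : S → ℝ) (hπne : ∃ x, π x ≠ 0)
    (hocc : ∀ x : S,
      0 < ∫⁻ ω, sumBefore (fun s => if s = x then 1 else 0) (retTime z ω) ω ∂ μ z ∧
      (∫⁻ ω, sumBefore (fun s => if s = x then 1 else 0) (retTime z ω) ω ∂ μ z) < ⊤)
    (hratio : ∀ x y : S,
      π x * (∫⁻ ω, sumBefore (fun s => if s = y then 1 else 0) (retTime z ω) ω ∂ μ z).toReal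
        = π y * (∫⁻ ω, sumBefore (fun s => if s = x then 1 else 0) (retTime z ω) ω ∂ μ z).toReal)
    (A : ℕ → Finset S) (hmono : Monotone A)
    (hcover : ∀ x : S, ∃ n, x ∈ A n) :
    ∀ x y : S, Filter.Tendsto (fun n => trPi P z (A n) x / trPi P z (A n) y)
      Filter.atTop (nhds (π x / π y)) := by
  have hfin : ∀ x, visitsBeforeReturn μ z x ≠ ⊤ := fun x => (hocc x).2.ne
  have hvis_ne : ∀ x, (visitsBeforeReturn μ z x).toReal ≠ 0 :=
    fun x => (ENNReal.toReal_pos (hocc x).1.ne' (hfin x)).ne'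
  have hπ : ∀ y, π y ≠ 0 := by
    obtain ⟨x₀, hx₀⟩ := hπne
    intro y hy
    have h := hratio x₀ y
    rw [hy, zero_mul] at h
    exact mul_ne_zero hx₀ (hvis_ne y) h
  intro x y
  have hπxy : π x / π y
      = (visitsBeforeReturn μ z x).toReal / (visitsBeforeReturn μ z y).toReal := by
    rw [div_eq_div_iff (hπ y) (hvis_ne y), mul_comm _ (π y)]
    exact hratio x y
  rw [hπxy]
  refine ((tendsto_trWeight hP hirr hμ hfin hmono hcover x).div
    (tendsto_trWeight hP hirr hμ hfin hmono hcover y) (hvis_ne y)).congr fun n => ?_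
  exact (trPi_div_trPi (trNu_vecMul_inv_nonneg hP hirr hμ hfin (A n)) x y).symm

open MCTrunc in
/-- Remark 2: for an irreducible null recurrent chain, the ratios of
the truncation approximations converge to the ratios of the (unique up to constant)
nonnegative solution of `π = πP`. -/
theorem trPi_ratio_tendsto_null_recurrent
    {S : Type*} [Countable S] [DecidableEq S]
    [MeasurableSpace S] [MeasurableSingletonClass S]
    (P : S → S → ℝ) (μ : S → MeasureTheory.Measure (ℕ → S)) (z : S)
    (hP : IsStochasticMatrix P) (hirr : IsIrreducibleMatrix P)
    (hμ : IsMarkovChain P μ) (hrec : IsRecurrent μ)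
    (hnull : ∫⁻ ω, sumBefore (fun _ => 1) (retTime z ω) ω ∂ μ z = ⊤)
    (π : S → ℝ) (hπ0 : ∀ x, 0 ≤ π x) (hπne : ∃ x, π x ≠ 0)
    (hstat : ∀ y, HasSum (fun x => π x * P x y) (π y))
    (hocc : ∀ x : S,
      0 < ∫⁻ ω, sumBefore (fun s => if s = x then 1 else 0) (retTime z ω) ω ∂ μ z ∧
      (∫⁻ ω, sumBefore (fun s => if s = x then 1 else 0) (retTime z ω) ω ∂ μ z) < ⊤)
    (hratio : ∀ x y : S,
      π x * (∫⁻ ω, sumBefore (fun s => if s = y then 1 else 0) (retTime z ω) ω ∂ μ z).toReal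
        = π y * (∫⁻ ω, sumBefore (fun s => if s = x then 1 else 0) (retTime z ω) ω ∂ μ z).toReal)
    (A : ℕ → Finset S) (hzA : z ∈ A 0) (hmono : Monotone A)
    (hcover : ∀ x : S, ∃ n, x ∈ A n) :
    ∀ x y : S, Filter.Tendsto (fun n => trPi P z (A n) x / trPi P z (A n) y)
      Filter.atTop (nhds (π x / π y)) :=
  trPi_ratio_tendsto_null_recurrent_general P μ z hP hirr hμ π hπne hocc hratio A hmono hcover
end
end

section
/- (Sandwich error bound) Suppose κ̲(r) ≤ E_z[∑_{j=0}^{τ(z)−1} r(X_j)] ≤ κ̃(r) and κ̲(e) ≤ E_z[τ(z)] ≤ κ̃(e), where κ̲(r), κ̲(e), κ̃(r), κ̃(e) are positive reals with κ̲(r) = r(z) + ν̃(I − B̃)^{-1} r̃ and κ̲(e) = 1 + ν̃(I − B̃)^{-1} ẽ. Then κ̲(r)/κ̃(e) ≤ α(r) ≤ κ̃(r)/κ̲(e) and κ̲(r)/κ̃(e) ≤ π̃ r ≤ κ̃(r)/κ̲(e), and consequently |α(r) − π̃ r| ≤ κ̃(r)/κ̲(e) − κ̲(r)/κ̃(e),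 where α(r) = ∑_x π(x) r(x) and π̃ r = ∑_{x∈A} π̃(x) r(x). -/
open MeasureTheory ENNReal Filter

noncomputable section

/-!
Summing the occupation identity `π(y) E_z[τ(z)] = E_z[#visits to y before τ(z)]` against `r`
(Tonelli) gives the regenerative ratio `E_z[∑_{j<τ(z)} r(X_j)] = α(r) E_z[τ(z)]`, so `α(r)` is a
ratio whose numerator and denominator are sandwiched by the given bounds. The truncation
approximation is the ratio `κ̲(r)/κ̲(e)` of the two lower bounds themselves, so it lies in the same
interval `[κ̲(r)/κ̃(e), κ̃(r)/κ̲(e)]`, and two points of an interval are at most its length apart.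
-/

namespace MCTrunc

variable {S : Type*}

lemma sumBefore_eq_tsum (r : S → ℝ) (b : ℕ∞) (ω : ℕ → S) :
    sumBefore r b ω = ∑' j : ℕ, if (j : ℕ∞) < b then ENNReal.ofReal (r (ω j)) else 0 := by
  simp [sumBefore, sumOver]

lemma sumBefore_eq_tsum_visits [DecidableEq S] (r : S → ℝ) (b : ℕ∞) (ω : ℕ → S) :
    sumBefore r b ω =
      ∑' y, ENNReal.ofReal (r y) * sumBefore (fun s => if s = y then 1 else 0) b ω := by
  simp_rw [sumBefore_eq_tsum, ← ENNReal.tsum_mul_left]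
  rw [ENNReal.tsum_comm]
  congr 1 with j
  split_ifs <;> simp [apply_ite ENNReal.ofReal, eq_comm (a := ω j)]

lemma lt_retTime_iff {z : S} {ω : ℕ → S} {j : ℕ} :
    (j : ℕ∞) < retTime z ω ↔ ∀ n ∈ Finset.Icc 1 j, ω n ≠ z := by
  rw [retTime, ← ENat.add_one_le_iff (ENat.natCast_ne_top j), le_sInf_iff]
  simp only [Set.mem_ofPred_eq, forall_exists_index, and_imp, Finset.mem_Icc]
  rw [forall_comm]
  simp only [forall_eq, ← not_lt]
  norm_cast
  grind

lemma measurable_sumBefore_retTime [Countable S] [MeasurableSpace S] [MeasurableSingletonClass S]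
    (r : S → ℝ) (z : S) : Measurable fun ω : ℕ → S => sumBefore r (retTime z ω) ω := by
  simp_rw [sumBefore_eq_tsum]
  refine Measurable.tsum fun j => Measurable.ite ?_ ?_ measurable_const
  · simp only [lt_retTime_iff, Set.ofPred_forall]
    exact Finset.measurableSet_biInter _ fun n _ =>
      (measurableSet_singleton z).compl.preimage (measurable_pi_apply n)
  · exact ((measurable_of_countable r).comp (measurable_pi_apply j)).ennreal_ofReal

theorem lintegral_sumBefore_retTime_eq_mul [Countable S] [DecidableEq S] [MeasurableSpace S]
    [MeasurableSingletonClass S] (ν : Measure (ℕ → S)) (z : S) (π r : S → ℝ)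
    (hπ : ∀ x, 0 ≤ π x) (hr : ∀ x, 0 ≤ r x) (hπr : Summable fun x => π x * r x)
    (hvisits : ∀ y, ENNReal.ofReal (π y) * ∫⁻ ω, sumBefore (fun _ => 1) (retTime z ω) ω ∂ν
        = ∫⁻ ω, sumBefore (fun s => if s = y then 1 else 0) (retTime z ω) ω ∂ν) :
    ∫⁻ ω, sumBefore r (retTime z ω) ω ∂ν
      = ENNReal.ofReal (∑' x, π x * r x) * ∫⁻ ω, sumBefore (fun _ => 1) (retTime z ω) ω ∂ν := by
  calc ∫⁻ ω, sumBefore r (retTime z ω) ω ∂ν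
      = ∑' y, ENNReal.ofReal (r y) *
          ∫⁻ ω, sumBefore (fun s => if s = y then 1 else 0) (retTime z ω) ω ∂ν := by
        simp_rw [sumBefore_eq_tsum_visits r]
        rw [lintegral_tsum fun y => ((measurable_sumBefore_retTime _ z).const_mul _).aemeasurable]
        simp_rw [lintegral_const_mul _ (measurable_sumBefore_retTime _ z)]
    _ = ∑' y, ENNReal.ofReal (π y * r y) *
          ∫⁻ ω, sumBefore (fun _ => 1) (retTime z ω) ω ∂ν := by
        refine tsum_congr fun y => ?_
        rw [← hvisits y, ENNReal.ofReal_mul (hπ y)]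
        ring
    _ = _ := by
        rw [ENNReal.tsum_mul_right,
          ENNReal.ofReal_tsum_of_nonneg (fun x => mul_nonneg (hπ x) (hr x)) hπr]

lemma toReal_mem_Icc_of_ofReal_le {a b : ℝ} {I : ℝ≥0∞} (ha : 0 < a) (hlo : ENNReal.ofReal a ≤ I)
    (hhi : I ≤ ENNReal.ofReal b) : I.toReal ∈ Set.Icc a b := by
  have hb : 0 < b :=
    ENNReal.ofReal_pos.mp ((ENNReal.ofReal_pos.mpr ha).trans_le (hlo.trans hhi))
  exact ⟨(ENNReal.ofReal_le_iff_le_toReal (hhi.trans_lt ENNReal.ofReal_lt_top).ne).mp hlo,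
    ENNReal.toReal_le_of_le_ofReal hb.le hhi⟩

lemma mem_Icc_div_of_mul_mem_Icc {a b c d α L : ℝ} (hc : 0 < c) (hα : 0 ≤ α)
    (hαL : α * L ∈ Set.Icc a b) (hL : L ∈ Set.Icc c d) : α ∈ Set.Icc (a / d) (b / c) := by
  have hd : 0 < d := hc.trans_le (hL.1.trans hL.2)
  constructor
  · rw [div_le_iff₀ hd]
    exact hαL.1.trans (mul_le_mul_of_nonneg_left hL.2 hα)
  · rw [le_div_iff₀ hc]
    exact (mul_le_mul_of_nonneg_left hL.1 hα).trans hαL.2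

lemma sum_trPi_mul [DecidableEq S] (P : S → S → ℝ) {z : S} {A : Finset S} (hzA : z ∈ A)
    (r : S → ℝ) :
    ∑ x ∈ A, trPi P z A x * r x =
      (r z + Matrix.vecMul (trNu P z A) (1 - trB P z A)⁻¹ ⬝ᵥ trRes r z A) /
        (1 + Matrix.vecMul (trNu P z A) (1 - trB P z A)⁻¹ ⬝ᵥ trE z A) := by
  rw [← Finset.add_sum_erase A _ hzA, ← Finset.sum_attach (A.erase z), add_div]
  congr 1
  · simp [trPi, inv_mul_eq_div]
  · rw [dotProduct, Finset.sum_div, Finset.univ_eq_attach]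
    refine Finset.sum_congr rfl fun x _ => ?_
    simp [trPi, Finset.ne_of_mem_erase x.2, div_mul_eq_mul_div, trRes]

end MCTrunc

open MCTrunc in
theorem sandwich_error_bound_general
    {S : Type*} [Countable S] [DecidableEq S]
    [MeasurableSpace S] [MeasurableSingletonClass S]
    (P : S → S → ℝ) (μ : S → MeasureTheory.Measure (ℕ → S)) (z : S) (A : Finset S)
    (hzA : z ∈ A)
    (π : S → ℝ) (hπ0 : ∀ x, 0 ≤ π x)
    (hrep : ∀ y : S,
      ENNReal.ofReal (π y) * (∫⁻ ω, sumBefore (fun _ => 1) (retTime z ω) ω ∂ μ z)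
        = ∫⁻ ω, sumBefore (fun s => if s = y then 1 else 0) (retTime z ω) ω ∂ μ z)
    (r : S → ℝ) (hr : ∀ x, 0 ≤ r x) (hsummable : Summable (fun x => π x * r x))
    (κr κe Kr Ke : ℝ)
    (hκr : κr = r z + dotProduct
        (Matrix.vecMul (trNu P z A) (1 - trB P z A)⁻¹) (trRes r z A))
    (hκe : κe = 1 + dotProduct
        (Matrix.vecMul (trNu P z A) (1 - trB P z A)⁻¹) (trE z A))
    (hκrpos : 0 < κr) (hκepos : 0 < κe)
    (hlr : ENNReal.ofReal κr ≤ ∫⁻ ω, sumBefore r (retTime z ω) ω ∂ μ z)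
    (hur : (∫⁻ ω, sumBefore r (retTime z ω) ω ∂ μ z) ≤ ENNReal.ofReal Kr)
    (hle : ENNReal.ofReal κe ≤ ∫⁻ ω, sumBefore (fun _ => 1) (retTime z ω) ω ∂ μ z)
    (hue : (∫⁻ ω, sumBefore (fun _ => 1) (retTime z ω) ω ∂ μ z) ≤ ENNReal.ofReal Ke) :
    (κr / Ke ≤ ∑' x : S, π x * r x) ∧ ((∑' x : S, π x * r x) ≤ Kr / κe) ∧
    (κr / Ke ≤ ∑ x ∈ A, trPi P z A x * r x) ∧
    ((∑ x ∈ A, trPi P z A x * r x) ≤ Kr / κe) ∧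
    |(∑' x : S, π x * r x) - ∑ x ∈ A, trPi P z A x * r x| ≤ Kr / κe - κr / Ke := by
  have hα0 : 0 ≤ ∑' x, π x * r x := tsum_nonneg fun x => mul_nonneg (hπ0 x) (hr x)
  have hτ := toReal_mem_Icc_of_ofReal_le hκepos hle hue
  have hreward := toReal_mem_Icc_of_ofReal_le hκrpos hlr hur
  rw [lintegral_sumBefore_retTime_eq_mul (μ z) z π r hπ0 hr hsummable hrep, ENNReal.toReal_mul,
    ENNReal.toReal_ofReal hα0] at hreward
  have hα := mem_Icc_div_of_mul_mem_Icc hκepos hα0 hreward hτ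
  have htrunc : ∑ x ∈ A, trPi P z A x * r x = κr / κe := by
    rw [sum_trPi_mul P hzA, hκr, hκe]
  have htrunc_mem : κr / κe ∈ Set.Icc (κr / Ke) (Kr / κe) :=
    mem_Icc_div_of_mul_mem_Icc hκepos (div_nonneg hκrpos.le hκepos.le)
      (by rw [div_mul_cancel₀ κr hκepos.ne']; exact ⟨le_rfl, hreward.1.trans hreward.2⟩)
      ⟨le_rfl, hτ.1.trans hτ.2⟩
  rw [htrunc, ← Real.dist_eq]
  exact ⟨hα.1, hα.2, htrunc_mem.1, htrunc_mem.2, Real.dist_le_of_mem_Icc hα htrunc_mem⟩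

open MCTrunc in
/-- sandwich error bound: if `κ̲(r) ≤ E_z[∑_{j<τ(z)} r(X_j)] ≤ κ̃(r)` and
`κ̲(e) ≤ E_z[τ(z)] ≤ κ̃(e)`, then `κ̲(r)/κ̃(e) ≤ α(r) ≤ κ̃(r)/κ̲(e)`,
`κ̲(r)/κ̃(e) ≤ π̃ r ≤ κ̃(r)/κ̲(e)`, and `|α(r) - π̃ r| ≤ κ̃(r)/κ̲(e) - κ̲(r)/κ̃(e)`. -/
theorem sandwich_error_bound
    {S : Type*} [Countable S] [DecidableEq S]
    [MeasurableSpace S] [MeasurableSingletonClass S]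
    (P : S → S → ℝ) (μ : S → MeasureTheory.Measure (ℕ → S)) (z : S) (A : Finset S)
    (hP : IsStochasticMatrix P) (hirr : IsIrreducibleMatrix P)
    (hμ : IsMarkovChain P μ) (hpos : IsPositiveRecurrent μ) (hzA : z ∈ A)
    (hunit : IsUnit (1 - trB P z A))
    (π : S → ℝ) (hπ0 : ∀ x, 0 ≤ π x) (hπ1 : HasSum π 1)
    (hstat : ∀ y, HasSum (fun x => π x * P x y) (π y))
    (hrep : ∀ y : S,
      ENNReal.ofReal (π y) * (∫⁻ ω, sumBefore (fun _ => 1) (retTime z ω) ω ∂ μ z)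
        = ∫⁻ ω, sumBefore (fun s => if s = y then 1 else 0) (retTime z ω) ω ∂ μ z)
    (r : S → ℝ) (hr : ∀ x, 0 ≤ r x) (hsummable : Summable (fun x => π x * r x))
    (κr κe Kr Ke : ℝ)
    (hκr : κr = r z + dotProduct
        (Matrix.vecMul (trNu P z A) (1 - trB P z A)⁻¹) (trRes r z A))
    (hκe : κe = 1 + dotProduct
        (Matrix.vecMul (trNu P z A) (1 - trB P z A)⁻¹) (trE z A))
    (hκrpos : 0 < κr) (hκepos : 0 < κe) (hKrpos : 0 < Kr) (hKepos : 0 < Ke)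
    (hlr : ENNReal.ofReal κr ≤ ∫⁻ ω, sumBefore r (retTime z ω) ω ∂ μ z)
    (hur : (∫⁻ ω, sumBefore r (retTime z ω) ω ∂ μ z) ≤ ENNReal.ofReal Kr)
    (hle : ENNReal.ofReal κe ≤ ∫⁻ ω, sumBefore (fun _ => 1) (retTime z ω) ω ∂ μ z)
    (hue : (∫⁻ ω, sumBefore (fun _ => 1) (retTime z ω) ω ∂ μ z) ≤ ENNReal.ofReal Ke) :
    (κr / Ke ≤ ∑' x : S, π x * r x) ∧ ((∑' x : S, π x * r x) ≤ Kr / κe) ∧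
    (κr / Ke ≤ ∑ x ∈ A, trPi P z A x * r x) ∧
    ((∑ x ∈ A, trPi P z A x * r x) ≤ Kr / κe) ∧
    |(∑' x : S, π x * r x) - ∑ x ∈ A, trPi P z A x * r x| ≤ Kr / κe - κr / Ke :=
  sandwich_error_bound_general P μ z A hzA π hπ0 hrep r hr hsummable κr κe Kr Ke hκr hκe hκrpos
    hκepos hlr hur hle hue
end
end
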